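/- arXiv:1707.01522 — 6 statements merged into one kernel-verified Lean document; each statement's English description precedes it below -/
import Mathlib

section
/- Let F be a right-continuous distribution function with F(0−) = 0 such that the limit lim_{h→0+} (F(h) − F(0))/h exists in [0, ∞], and suppose F is not concentrated at 0 (i.e., F does not assign probability 1 to the point 0). Write F̄(x) = 1 − F(x). Then F̄(2x) = F̄(x)² for all x ≥ 0 if and only if there exists λ > 0 such that F(x) = 1 − e^{−λx} for all x ≥ 0. -/
open Filter Topology

/-! If `F̄ = 1 - F` satisfies `F̄ (2x) = F̄ x ^ 2`, then `φ = -log F̄` satisfies `φ (2x) = 2 φ x`,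
so `φ h / h` takes the value `φ x / x` at every `h = x / 2 ^ n`. Right-continuity at `0` gives
`φ h ~ F h` as `h → 0+`, so the right derivative of `F` at `0` is also the limit of `φ h / h`;
it cannot be infinite, and if it is `c` then `φ x = c x`. Finally `F → 1` at infinity forces
`c > 0`. -/

open Asymptotics Real

lemma Real.isEquivalent_neg_log_nhds_one : (fun t : ℝ => -log t) ~[𝓝 1] fun t => 1 - t := by
  have hlog : (fun t : ℝ => log t) ~[𝓝 1] fun t => t - 1 := by
    refine ((hasDerivAt_iff_isLittleO.mp (hasDerivAt_log one_ne_zero)).congr_left fun t => ?_)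
      |>.congr_right fun t => ?_ <;> simp
  simpa using hlog.neg

lemma tendsto_div_two_pow_nhdsGT_zero {x : ℝ} (hx : 0 < x) :
    Tendsto (fun n : ℕ => x / 2 ^ n) atTop (𝓝[>] 0) := by
  refine tendsto_nhdsWithin_iff.mpr ⟨?_, .of_forall fun n => div_pos hx (by positivity)⟩
  simpa [div_eq_mul_inv] using
    (tendsto_inv_atTop_zero.comp (tendsto_pow_atTop_atTop_of_one_lt one_lt_two)).const_mul x

section Doubling

variable {g : ℝ → ℝ}

section Additive

variable (hg : ∀ x, 0 ≤ x → g (2 * x) = 2 * g x)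
include hg

lemma div_two_pow_div_eq_of_doubling {x : ℝ} (hx : 0 ≤ x) (n : ℕ) :
    g (x / 2 ^ n) / (x / 2 ^ n) = g x / x := by
  have hmul : g x = 2 ^ n * g (x / 2 ^ n) := by
    induction n with
    | zero => simp
    | succ n ih =>
      have hhalf : 2 * (x / 2 ^ (n + 1)) = x / 2 ^ n := by ring
      rw [ih, ← hhalf, hg _ (by positivity)]
      ring
  rw [hmul]
  field_simp

lemma frequently_div_eq_of_doubling {x : ℝ} (hx : 0 < x) :
    ∃ᶠ h in 𝓝[>] 0, g h / h = g x / x :=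
  (tendsto_div_two_pow_nhdsGT_zero hx).frequently
    (.of_forall (div_two_pow_div_eq_of_doubling hg hx.le))

lemma eq_mul_of_doubling {c : ℝ} (hc : Tendsto (fun h => g h / h) (𝓝[>] 0) (𝓝 c))
    {x : ℝ} (hx : 0 < x) : g x = c * x := by
  have := tendsto_nhds_unique_of_frequently_eq tendsto_const_nhds hc
    ((frequently_div_eq_of_doubling hg hx).mono fun _ h => h.symm)
  rw [← this, div_mul_cancel₀ _ hx.ne']

lemma not_tendsto_div_atTop_of_doubling : ¬ Tendsto (fun h => g h / h) (𝓝[>] 0) atTop :=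
  fun htop => ((htop.eventually_gt_atTop (g 1 / 1)).and_frequently
    (frequently_div_eq_of_doubling hg one_pos)).exists.elim fun _ h => h.1.ne' h.2

end Additive

section Multiplicative

variable (hg : ∀ x, 0 ≤ x → g (2 * x) = g x ^ 2)
include hg

lemma div_two_pow_pow_eq_of_sq_doubling {x : ℝ} (hx : 0 ≤ x) (n : ℕ) :
    g (x / 2 ^ n) ^ 2 ^ n = g x := by
  induction n with
  | zero => simp
  | succ n ih =>
    have hhalf : 2 * (x / 2 ^ (n + 1)) = x / 2 ^ n := by ring
    rw [← ih, ← hhalf, hg _ (by positivity)]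
    ring

lemma pos_of_sq_doubling (hpos : ∀ᶠ h in 𝓝[>] 0, 0 < g h) {x : ℝ} (hx : 0 < x) : 0 < g x := by
  obtain ⟨n, hn⟩ := ((tendsto_div_two_pow_nhdsGT_zero hx).eventually hpos).exists
  rw [← div_two_pow_pow_eq_of_sq_doubling hg hx.le n]
  positivity

lemma neg_log_doubling : ∀ x, 0 ≤ x → -log (g (2 * x)) = 2 * -log (g x) := fun x hx => by
  rw [hg x hx, log_pow]
  push_cast
  ring

variable (hg1 : Tendsto g (𝓝[>] 0) (𝓝 1))
include hg1

omit hg in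
lemma isEquivalent_neg_log_div_one_sub_div :
    (fun h => -log (g h) / h) ~[𝓝[>] 0] fun h => (1 - g h) / h :=
  (isEquivalent_neg_log_nhds_one.comp_tendsto hg1).div IsEquivalent.refl

lemma eq_exp_of_sq_doubling {c : ℝ} (hc : Tendsto (fun h => (1 - g h) / h) (𝓝[>] 0) (𝓝 c))
    {x : ℝ} (hx : 0 < x) : g x = exp (-c * x) := by
  have hlog := eq_mul_of_doubling (neg_log_doubling hg)
    ((isEquivalent_neg_log_div_one_sub_div hg1).symm.tendsto_nhds hc) hx
  have hpos := pos_of_sq_doubling hg (hg1.eventually (eventually_gt_nhds one_pos)) hx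
  rw [neg_mul, ← hlog, neg_neg, exp_log hpos]

lemma not_tendsto_one_sub_div_atTop_of_sq_doubling :
    ¬ Tendsto (fun h => (1 - g h) / h) (𝓝[>] 0) atTop := fun htop =>
  not_tendsto_div_atTop_of_doubling (neg_log_doubling hg)
    ((isEquivalent_neg_log_div_one_sub_div hg1).symm.tendsto_atTop htop)

end Multiplicative

end Doubling

lemma ENNReal.exists_tendsto_or_tendsto_atTop_of_tendsto_ofReal {α : Type*} {l : Filter α}
    {f : α → ℝ} (hf : ∀ᶠ a in l, 0 ≤ f a) {L : ENNReal}
    (h : Tendsto (fun a => ENNReal.ofReal (f a)) l (𝓝 L)) :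
    (∃ c, Tendsto f l (𝓝 c)) ∨ Tendsto f l atTop := by
  obtain rfl | hL := eq_or_ne L ⊤
  · exact .inr (tendsto_ofReal_nhds_top.mp h)
  · exact .inl ⟨L.toReal, ((ENNReal.tendsto_toReal hL).comp h).congr'
      (hf.mono fun _ ha => ENNReal.toReal_ofReal ha)⟩

lemma pos_of_tendsto_one_sub_exp {F : ℝ → ℝ} {c : ℝ} (htop : Tendsto F atTop (𝓝 1))
    (hF : ∀ x, 0 < x → F x = 1 - exp (-c * x)) : 0 < c := by
  by_contra! hc
  obtain ⟨x, hFx, hx⟩ :=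
    ((htop.eventually (lt_mem_nhds one_pos)).and (eventually_gt_atTop 0)).exists
  have : 1 ≤ exp (-c * x) := one_le_exp (mul_nonneg (neg_nonneg.mpr hc) hx.le)
  linarith [hF x hx]

theorem arnold_gupta_characterization_exponential_general
    (F : ℝ → ℝ) (hmono : Monotone F)
    (hrc : ∀ x : ℝ, ContinuousWithinAt F (Set.Ici x) x)
    (htop : Tendsto F atTop (𝓝 1))
    (hlim : ∃ l : ENNReal,
      Tendsto (fun h : ℝ => ENNReal.ofReal ((F h - F 0) / h)) (𝓝[>] (0 : ℝ)) (𝓝 l))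
    (hnotconc : F 0 ≠ 1) :
    (∀ x : ℝ, 0 ≤ x → 1 - F (2 * x) = (1 - F x) ^ 2) ↔
      ∃ l : ℝ, 0 < l ∧ ∀ x : ℝ, 0 ≤ x → F x = 1 - Real.exp (-l * x) := by
  constructor
  · intro hsq
    have hF0 : F 0 = 0 := by
      have h0 := hsq 0 le_rfl
      rw [mul_zero] at h0
      have h : (1 - F 0) * F 0 = 0 := by linear_combination h0
      exact (mul_eq_zero.mp h).resolve_left (sub_ne_zero.mpr hnotconc.symm)
    have hsurv : Tendsto (fun h => 1 - F h) (𝓝[>] 0) (𝓝 1) := by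
      simpa [hF0] using tendsto_const_nhds.sub
        ((hrc 0).tendsto.mono_left (nhdsWithin_mono 0 Set.Ioi_subset_Ici_self))
    obtain ⟨l, hl⟩ := hlim
    simp only [hF0, sub_zero] at hl
    have hslope_nonneg : ∀ᶠ h in 𝓝[>] 0, 0 ≤ F h / h := eventually_nhdsWithin_of_forall
      fun h hh => div_nonneg (hF0 ▸ hmono (le_of_lt hh)) (le_of_lt hh)
    rcases ENNReal.exists_tendsto_or_tendsto_atTop_of_tendsto_ofReal hslope_nonneg hl with
      ⟨c, hc⟩ | hinf
    · have hF : ∀ x, 0 < x → F x = 1 - exp (-c * x) := fun x hx => by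
        rw [← eq_exp_of_sq_doubling hsq hsurv (by simpa using hc) hx, sub_sub_cancel]
      refine ⟨c, pos_of_tendsto_one_sub_exp htop hF, fun x hx => ?_⟩
      obtain rfl | hx := hx.eq_or_lt
      · simp [hF0]
      · exact hF x hx
    · exact (not_tendsto_one_sub_div_atTop_of_sq_doubling hsq hsurv (by simpa using hinf)).elim
  · rintro ⟨l, -, hF⟩ x hx
    rw [hF (2 * x) (by linarith), hF x hx, show -l * (2 * x) = -l * x + -l * x by ring, exp_add]
    ring

/-- **Arnold–Gupta characterization** (used by Angus). Let `F` be a right-continuous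
distribution function with `F(0-) = 0`, such that the limit of `(F h - F 0)/h` as `h → 0+`
exists in `[0, ∞]`, and which is not concentrated at `0`. Then `1 - F (2x) = (1 - F x)^2`
for all `x ≥ 0` iff `F` is an exponential distribution function. -/
theorem arnold_gupta_characterization_exponential
    (F : ℝ → ℝ) (hmono : Monotone F)
    (hrc : ∀ x : ℝ, ContinuousWithinAt F (Set.Ici x) x)
    (htop : Tendsto F atTop (𝓝 1)) (hbot : Tendsto F atBot (𝓝 0))
    (hzero_minus : Tendsto F (𝓝[<] (0 : ℝ)) (𝓝 0))
    (hlim : ∃ l : ENNReal,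
      Tendsto (fun h : ℝ => ENNReal.ofReal ((F h - F 0) / h)) (𝓝[>] (0 : ℝ)) (𝓝 l))
    (hnotconc : F 0 ≠ 1) :
    (∀ x : ℝ, 0 ≤ x → 1 - F (2 * x) = (1 - F x) ^ 2) ↔
      ∃ l : ℝ, 0 < l ∧ ∀ x : ℝ, 0 ≤ x → F x = 1 - Real.exp (-l * x) :=
  arnold_gupta_characterization_exponential_general F hmono hrc htop hlim hnotconc
end

section
/- Let X and Y be non-negative i.i.d. random variables whose common distribution is absolutely continuous with density f and distribution function F, and suppose the failure rate function t ↦ f(t)/(1 − F(t)) is monotone on [0, ∞). Then |X − Y| and 2·min(X,Y) are identically distributed if and only if there exists λ > 0 such that F(x) = 1 − e^{−λx} for x ≥ 0. -/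
/-!
Write `S = 1 - F` for the survival function and `μ` for the law of `X`. Independence gives
`P(|X - Y| > t) = 2 ∫ S(x + t) dμ(x)` and `P(2 min(X, Y) > t) = S(t / 2) ^ 2`, and since `μ` has
no atoms, `∫ S dμ = 1 / 2`; so the exponential law, for which `S(x + t) = S(x) S(t)`, satisfies
the identity. Conversely, the identity keeps `S` positive, so the failure rate `q = f / S` is
defined and `S = exp (-Q)` with `Q t = ∫₀ᵗ q`. A monotone `q` makes `Q` superadditive or
subadditive, i.e. `S(x + y) ≤ S(x) S(y)` or the reverse; integrating this in `x` at `y = 2t`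
against the identity forces `S(2t) = S(t) ^ 2`, that is `Q(2t) = 2 Q(t)`. For monotone `q` this
means `∫_b^{2b} q = ∫_0^b q`, which is only possible if `q` is constant on `(0, ∞)`.
-/

open MeasureTheory ProbabilityTheory Set Filter Topology Real

section IndependentCopies

variable {μ : Measure ℝ}

lemma prod_setOf_add_lt [SFinite μ] (t : ℝ) :
    μ.prod μ {p : ℝ × ℝ | p.1 + t < p.2} = ∫⁻ x, μ (Ioi (x + t)) ∂μ := by
  rw [Measure.prod_apply (measurableSet_lt (by fun_prop) (by fun_prop))]
  rfl

lemma prod_setOf_lt_abs_sub [SFinite μ] {t : ℝ} (ht : 0 ≤ t) :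
    μ.prod μ {p : ℝ × ℝ | t < |p.1 - p.2|} = 2 * ∫⁻ x, μ (Ioi (x + t)) ∂μ := by
  have hsplit : {p : ℝ × ℝ | t < |p.1 - p.2|} =
      Prod.swap ⁻¹' {p : ℝ × ℝ | p.1 + t < p.2} ∪ {p : ℝ × ℝ | p.1 + t < p.2} := by
    ext p
    simp only [mem_ofPred_eq, mem_union, mem_preimage, Prod.fst_swap, Prod.snd_swap, lt_abs]
    constructor <;> rintro (h | h) <;> [left; right; left; right] <;> linarith
  have hmeas : MeasurableSet {p : ℝ × ℝ | p.1 + t < p.2} :=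
    measurableSet_lt (by fun_prop) (by fun_prop)
  have hdisj : Disjoint (Prod.swap ⁻¹' {p : ℝ × ℝ | p.1 + t < p.2}) {p | p.1 + t < p.2} :=
    disjoint_left.2 fun p h1 h2 => by
      simp only [mem_preimage, mem_ofPred_eq, Prod.fst_swap, Prod.snd_swap] at h1 h2
      linarith
  rw [hsplit, measure_union hdisj hmeas, ← Measure.map_apply measurable_swap hmeas,
    Measure.prod_swap, prod_setOf_add_lt, two_mul]

lemma prod_setOf_lt_two_mul_min [SFinite μ] (t : ℝ) :
    μ.prod μ {p : ℝ × ℝ | t < 2 * min p.1 p.2} = μ (Ioi (t / 2)) ^ 2 := by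
  have : {p : ℝ × ℝ | t < 2 * min p.1 p.2} = Ioi (t / 2) ×ˢ Ioi (t / 2) := by
    ext p
    simp only [mem_ofPred_eq, mem_prod, mem_Ioi, ← lt_min_iff]
    constructor <;> intro h <;> linarith
  rw [this, Measure.prod_prod, sq]

lemma two_mul_lintegral_measure_Ioi [IsProbabilityMeasure μ] [NullSingletonClass μ] :
    2 * ∫⁻ x, μ (Ioi x) ∂μ = 1 := by
  have hdiag : μ.prod μ {p : ℝ × ℝ | p.1 = p.2} = 0 := by
    rw [Measure.measure_prod_null (measurableSet_eq_fun (by fun_prop) (by fun_prop))]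
    exact ae_of_all _ fun x => by simp [Set.preimage]
  have hoff : {p : ℝ × ℝ | 0 < |p.1 - p.2|} = {p : ℝ × ℝ | p.1 = p.2}ᶜ := by
    ext p
    simp [sub_eq_zero]
  have := prod_setOf_lt_abs_sub (μ := μ) le_rfl
  rw [hoff, prob_compl_eq_one_sub (measurableSet_eq_fun (by fun_prop) (by fun_prop)), hdiag]
    at this
  simpa using this.symm

lemma MeasureTheory.Measure.ext_of_Ioi {ν : Measure ℝ} [IsProbabilityMeasure μ]
    [IsProbabilityMeasure ν] (h : ∀ a, μ (Ioi a) = ν (Ioi a)) : μ = ν :=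
  Measure.ext_of_Iic μ ν fun a => by
    rw [← compl_Ioi, prob_compl_eq_one_sub measurableSet_Ioi,
      prob_compl_eq_one_sub measurableSet_Ioi, h]

theorem map_abs_sub_eq_map_two_mul_min_iff [IsProbabilityMeasure μ] (hnn : ∀ᵐ x ∂μ, 0 ≤ x) :
    (μ.prod μ).map (fun p => |p.1 - p.2|) = (μ.prod μ).map (fun p => 2 * min p.1 p.2) ↔
      ∀ t, 0 ≤ t → 2 * ∫⁻ x, μ (Ioi (x + t)) ∂μ = μ (Ioi (t / 2)) ^ 2 := by
  have habs : ∀ t, 0 ≤ t → (μ.prod μ).map (fun p => |p.1 - p.2|) (Ioi t) =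
      2 * ∫⁻ x, μ (Ioi (x + t)) ∂μ := fun t ht => by
    rw [Measure.map_apply (by fun_prop) measurableSet_Ioi]
    exact prod_setOf_lt_abs_sub ht
  have hmin : ∀ t, (μ.prod μ).map (fun p => 2 * min p.1 p.2) (Ioi t) = μ (Ioi (t / 2)) ^ 2 :=
    fun t => by
      rw [Measure.map_apply (by fun_prop) measurableSet_Ioi]
      exact prod_setOf_lt_two_mul_min t
  refine ⟨fun h t ht => by rw [← habs t ht, h, hmin], fun h => ?_⟩
  have := Measure.isProbabilityMeasure_map (μ := μ.prod μ) (f := fun p => |p.1 - p.2|)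
    (by fun_prop)
  have := Measure.isProbabilityMeasure_map (μ := μ.prod μ) (f := fun p => 2 * min p.1 p.2)
    (by fun_prop)
  refine Measure.ext_of_Ioi fun t => ?_
  rcases le_or_gt 0 t with ht | ht
  · rw [habs t ht, hmin, h t ht]
  · have hμ : μ (Ioi (t / 2)) = 1 := (prob_compl_eq_zero_iff measurableSet_Ioi).1 <|
      mem_ae_iff.1 <| hnn.mono fun x hx => show t / 2 < x by linarith
    rw [hmin, hμ, one_pow, Measure.map_apply (by fun_prop) measurableSet_Ioi,
      ← prob_compl_eq_zero_iff (measurableSet_Ioi.preimage (by fun_prop))]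
    convert measure_empty (μ := μ.prod μ)
    ext p
    simpa using ht.trans_le (abs_nonneg _)

end IndependentCopies

section CumulativeHazard

variable {q : ℝ → ℝ}

lemma Monotone.integral_add_integral_le (hq : Monotone q) {s t : ℝ} (hs : 0 ≤ s) (ht : 0 ≤ t) :
    (∫ u in 0..s, q u) + ∫ u in 0..t, q u ≤ ∫ u in 0..s + t, q u := by
  have hint : ∀ a b, IntervalIntegrable q volume a b := fun _ _ => hq.intervalIntegrable
  have hshift : ∫ u in 0..t, q u ≤ ∫ u in s..s + t, q u :=
    calc ∫ u in 0..t, q u ≤ ∫ u in 0..t, q (s + u) :=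
          intervalIntegral.integral_mono_on ht (hint 0 t)
            (Monotone.intervalIntegrable fun a b hab => hq (add_le_add_right hab s))
            fun u _ => hq (by linarith)
      _ = ∫ u in s..s + t, q u := by rw [intervalIntegral.integral_comp_add_left, add_zero]
  rw [← intervalIntegral.integral_add_adjacent_intervals (hint 0 s) (hint s (s + t))]
  linarith

lemma Antitone.integral_le_integral_add_integral (hq : Antitone q) {s t : ℝ} (hs : 0 ≤ s)
    (ht : 0 ≤ t) : ∫ u in 0..s + t, q u ≤ (∫ u in 0..s, q u) + ∫ u in 0..t, q u := by
  have := hq.neg.integral_add_integral_le hs ht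
  simp only [intervalIntegral.integral_neg] at this
  linarith

lemma Monotone.eq_of_integral_two_mul (hq : Monotone q)
    (h : ∀ t, 0 ≤ t → ∫ u in 0..2 * t, q u = 2 * ∫ u in 0..t, q u) {a b : ℝ} (ha : 0 < a)
    (hab : a ≤ b) : q a = q b := by
  refine (hq hab).antisymm (not_lt.1 fun hlt => ?_)
  have hint : ∀ a b, IntervalIntegrable q volume a b := fun _ _ => hq.intervalIntegrable
  have h₁ : ∫ u in 0..a, q u ≤ a * q a := by
    simpa using intervalIntegral.integral_mono_on ha.le (hint 0 a) intervalIntegrable_const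
      fun u hu => hq hu.2
  have h₂ : ∫ u in a..b, q u ≤ (b - a) * q b := by
    simpa using intervalIntegral.integral_mono_on hab (hint a b) intervalIntegrable_const
      fun u hu => hq hu.2
  have h₃ : b * q b ≤ ∫ u in b..2 * b, q u := by
    have := intervalIntegral.integral_mono_on (by linarith) intervalIntegrable_const
      (hint b (2 * b)) fun u hu => hq hu.1
    simpa [show 2 * b - b = b by ring] using this
  have hsplit₁ := intervalIntegral.integral_add_adjacent_intervals (hint 0 a) (hint a b)
  have hsplit₂ := intervalIntegral.integral_add_adjacent_intervals (hint 0 b) (hint b (2 * b))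
  nlinarith [h b (ha.trans_le hab).le, mul_pos ha (sub_pos.2 hlt)]

lemma Monotone.exists_integral_eq_mul (hq : Monotone q)
    (h : ∀ t, 0 ≤ t → ∫ u in 0..2 * t, q u = 2 * ∫ u in 0..t, q u) :
    ∃ c, ∀ t, 0 ≤ t → ∫ u in 0..t, q u = c * t := by
  have hconst : ∀ u, 0 < u → q u = q 1 := fun u hu =>
    (le_total u 1).elim (hq.eq_of_integral_two_mul h hu) fun h1 =>
      (hq.eq_of_integral_two_mul h one_pos h1).symm
  refine ⟨q 1, fun t ht => ?_⟩
  rw [intervalIntegral.integral_congr_ae (g := fun _ => q 1) (ae_of_all _ fun u hu => by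
    rw [uIoc_of_le ht] at hu; exact hconst u hu.1)]
  simp [mul_comm]

lemma Antitone.exists_integral_eq_mul (hq : Antitone q)
    (h : ∀ t, 0 ≤ t → ∫ u in 0..2 * t, q u = 2 * ∫ u in 0..t, q u) :
    ∃ c, ∀ t, 0 ≤ t → ∫ u in 0..t, q u = c * t := by
  obtain ⟨c, hc⟩ := hq.neg.exists_integral_eq_mul fun t ht => by
    simp [intervalIntegral.integral_neg, h t ht]
  exact ⟨-c, fun t ht => by rw [neg_mul, ← hc t ht, intervalIntegral.integral_neg, neg_neg]⟩

theorem eq_exp_neg_integral_of_eq_one_sub_integral {r g : ℝ → ℝ}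
    (hq : ∀ a b, IntervalIntegrable q volume a b) (hr : ∀ b, Tendsto q (𝓝[>] b) (𝓝 (r b)))
    (hqg : ∀ a b, IntervalIntegrable (fun u => q u * g u) volume a b)
    (hg : ∀ t, 0 ≤ t → g t = 1 - ∫ u in 0..t, q u * g u) {t : ℝ} (ht : 0 ≤ t) :
    g t = exp (-∫ u in 0..t, q u) := by
  set Q := fun t => ∫ u in 0..t, q u
  set P := fun t => 1 - ∫ u in 0..t, q u * g u
  have hsm : ∀ {k : ℝ → ℝ}, (∀ a b, IntervalIntegrable k volume a b) → ∀ b,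
      StronglyMeasurableAtFilter k (𝓝[>] b) := fun hk b =>
    AEStronglyMeasurable.stronglyMeasurableAtFilter_of_mem (hk b (b + 1)).1.aestronglyMeasurable
      (Ioc_mem_nhdsGT (by linarith))
  have hP : Continuous P := continuous_const.sub (intervalIntegral.continuous_primitive hqg 0)
  have hQ' : ∀ b, HasDerivWithinAt Q (r b) (Ici b) b := fun b =>
    intervalIntegral.integral_hasDerivWithinAt_of_tendsto_ae_right (hq 0 b) (hsm hq b)
      ((hr b).mono_left inf_le_left)
  have hP' : ∀ b, 0 ≤ b → HasDerivWithinAt P (-(r b * P b)) (Ici b) b := fun b hb => by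
    have hlim : Tendsto (fun u => q u * g u) (𝓝[>] b) (𝓝 (r b * P b)) := by
      refine ((hr b).mul ((hP.tendsto b).mono_left nhdsWithin_le_nhds)).congr' ?_
      filter_upwards [self_mem_nhdsWithin] with u hu
      rw [hg u (hb.trans (le_of_lt hu))]
    exact (intervalIntegral.integral_hasDerivWithinAt_of_tendsto_ae_right (hqg 0 b) (hsm hqg b)
      (hlim.mono_left inf_le_left)).const_sub 1
  -- integrating factor: `P · exp Q` has vanishing right derivative on `[0, ∞)`
  have hconst := constant_of_has_deriv_right_zero (f := fun t => P t * exp (Q t))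
    (hP.mul (intervalIntegral.continuous_primitive hq 0).rexp).continuousOn
    (fun b hb => ((hP' b hb.1).mul (hQ' b).exp).congr_deriv (by ring)) t ⟨ht, le_rfl⟩
  simp only [P, Q, intervalIntegral.integral_same, sub_zero, exp_zero, mul_one] at hconst
  rw [hg t ht, exp_neg]
  exact eq_inv_of_mul_eq_one_left hconst

end CumulativeHazard

/-- The failure rate `f / (1 - F)`, frozen at its value at `0` on `(-∞, 0)` and truncated below
at `0`, so that it is monotone on all of `ℝ` as soon as it is monotone on `[0, ∞)`. -/
noncomputable def hazardRate (μ : Measure ℝ) (f : ℝ → ℝ) (t : ℝ) : ℝ :=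
  max (f (max t 0) / (1 - cdf μ (max t 0))) 0

lemma hazardRate_monotone_or_antitone {μ : Measure ℝ} {f : ℝ → ℝ}
    (hfail : MonotoneOn (fun t => f t / (1 - cdf μ t)) (Ici 0) ∨
      AntitoneOn (fun t => f t / (1 - cdf μ t)) (Ici 0)) :
    Monotone (hazardRate μ f) ∨ Antitone (hazardRate μ f) := by
  refine hfail.imp (fun h s t hst => ?_) (fun h s t hst => ?_) <;>
    exact max_le_max (h (mem_Ici.2 (le_max_right _ 0)) (mem_Ici.2 (le_max_right _ 0))
      (max_le_max hst le_rfl)) le_rfl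

lemma ofReal_eq_ofReal_hazardRate_mul {μ : Measure ℝ} {f : ℝ → ℝ} {u : ℝ} (hu : 0 ≤ u)
    (hpos : 0 < 1 - cdf μ u) :
    ENNReal.ofReal (f u) = ENNReal.ofReal (hazardRate μ f u * (1 - cdf μ u)) := by
  rw [hazardRate, max_eq_left hu, max_mul_of_nonneg _ _ hpos.le, zero_mul,
    div_mul_cancel₀ _ hpos.ne', ENNReal.ofReal_max, ENNReal.ofReal_zero, max_eq_left zero_le]

section Survival

variable {μ : Measure ℝ} [IsProbabilityMeasure μ]

lemma measure_Ioi_eq_ofReal_one_sub_cdf (t : ℝ) : μ (Ioi t) = ENNReal.ofReal (1 - cdf μ t) := by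
  rw [← compl_Iic, prob_compl_eq_one_sub measurableSet_Iic, ← ofReal_cdf, ← ENNReal.ofReal_one,
    ENNReal.ofReal_sub _ (cdf_nonneg μ t)]

lemma cdf_zero_of_ae_nonneg [NullSingletonClass μ] (hnn : ∀ᵐ x ∂μ, 0 ≤ x) : cdf μ 0 = 0 := by
  have : μ (Iio 0) = 0 := measure_mono_null (fun x hx => not_le.2 hx) (ae_iff.1 hnn)
  rw [cdf_eq_real, measureReal_def, ← measure_congr Iio_ae_eq_Iic, this, ENNReal.toReal_zero]

lemma cdf_eq_integral_of_withDensity {f k : ℝ → ℝ}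
    (hdens : μ = volume.withDensity fun x => ENNReal.ofReal (f x)) (h0 : cdf μ 0 = 0) {t : ℝ}
    (ht : 0 ≤ t) (hk : ∀ u ∈ Ioc 0 t, ENNReal.ofReal (f u) = ENNReal.ofReal (k u))
    (hk0 : ∀ u ∈ Ioc 0 t, 0 ≤ k u) (hint : IntervalIntegrable k volume 0 t) :
    cdf μ t = ∫ u in 0..t, k u := by
  rw [intervalIntegral.integral_of_le ht]
  have hμ : μ (Ioc 0 t) = ENNReal.ofReal (∫ u in Ioc 0 t, k u) := by
    rw [ofReal_integral_eq_lintegral_ofReal hint.1 ((ae_restrict_mem measurableSet_Ioc).mono hk0),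
      hdens, withDensity_apply _ measurableSet_Ioc]
    exact setLIntegral_congr_fun measurableSet_Ioc hk
  rw [← measure_cdf μ, StieltjesFunction.measure_Ioc, h0, sub_zero] at hμ
  exact (ENNReal.ofReal_eq_ofReal_iff (cdf_nonneg μ t)
    (setIntegral_nonneg measurableSet_Ioc hk0)).1 hμ

lemma one_sub_cdf_pos [NullSingletonClass μ] (hnn : ∀ᵐ x ∂μ, 0 ≤ x)
    (heq : ∀ t, 0 ≤ t → 2 * ∫⁻ x, μ (Ioi (x + t)) ∂μ = μ (Ioi (t / 2)) ^ 2) {t : ℝ}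
    (ht : 0 ≤ t) : 0 < 1 - cdf μ t := by
  rw [← ENNReal.ofReal_pos, ← measure_Ioi_eq_ofReal_one_sub_cdf, pos_iff_ne_zero]
  intro hzero
  have hhalve : ∀ s, 0 ≤ s → μ (Ioi s) = 0 → μ (Ioi (s / 2)) = 0 := fun s hs hs0 => by
    have hint : ∫⁻ x, μ (Ioi (x + s)) ∂μ = 0 := lintegral_eq_zero_of_ae_eq_zero <|
      hnn.mono fun x hx => measure_mono_null (Ioi_subset_Ioi (by linarith)) hs0
    simpa [hint] using (heq s hs).symm
  have hseq : ∀ n : ℕ, μ (Ioi (t * (1 / 2) ^ n)) = 0 := by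
    intro n
    induction n with
    | zero => simpa using hzero
    | succ n ih =>
      have := hhalve _ (by positivity) ih
      rwa [pow_succ, ← mul_assoc, mul_one_div]
  have hcover : Ioi (0 : ℝ) ⊆ ⋃ n : ℕ, Ioi (t * (1 / 2) ^ n) := fun x hx =>
    have hlim := (tendsto_pow_atTop_nhds_zero_of_lt_one (by norm_num) (by norm_num :
      (1 / 2 : ℝ) < 1)).const_mul t
    mem_iUnion.2 ((hlim.eventually (gt_mem_nhds (by simpa using hx))).exists)
  have := measure_mono_null hcover (measure_iUnion_null hseq)
  rw [measure_Ioi_eq_ofReal_one_sub_cdf, cdf_zero_of_ae_nonneg hnn] at this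
  simp at this

lemma measure_Ioi_two_mul_eq_sq (hnn : ∀ᵐ x ∂μ, 0 ≤ x)
    (hhalf : 2 * ∫⁻ x, μ (Ioi x) ∂μ = 1)
    (heq : ∀ t, 0 ≤ t → 2 * ∫⁻ x, μ (Ioi (x + t)) ∂μ = μ (Ioi (t / 2)) ^ 2)
    (hmul : (∀ x y, 0 ≤ x → 0 ≤ y → μ (Ioi (x + y)) ≤ μ (Ioi x) * μ (Ioi y)) ∨
      ∀ x y, 0 ≤ x → 0 ≤ y → μ (Ioi x) * μ (Ioi y) ≤ μ (Ioi (x + y))) {t : ℝ} (ht : 0 ≤ t) :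
    μ (Ioi (2 * t)) = μ (Ioi t) ^ 2 := by
  have h₁ : 2 * ∫⁻ x, μ (Ioi (x + 2 * t)) ∂μ = μ (Ioi t) ^ 2 := by
    simpa using heq (2 * t) (by positivity)
  have h₂ : 2 * ∫⁻ x, μ (Ioi x) * μ (Ioi (2 * t)) ∂μ = μ (Ioi (2 * t)) := by
    rw [lintegral_mul_const' _ _ (measure_ne_top _ _), ← mul_assoc, hhalf, one_mul]
  rcases hmul with hmul | hmul
  · refine le_antisymm (by simpa [sq, two_mul] using hmul t t ht ht) ?_
    rw [← h₁, ← h₂]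
    gcongr 2 * ?_
    exact lintegral_mono_ae (hnn.mono fun x hx => hmul x (2 * t) hx (by positivity))
  · refine le_antisymm ?_ (by simpa [sq, two_mul] using hmul t t ht ht)
    rw [← h₁, ← h₂]
    gcongr 2 * ?_
    exact lintegral_mono_ae (hnn.mono fun x hx => hmul x (2 * t) hx (by positivity))

lemma one_sub_cdf_eq_exp_neg_integral_hazardRate {f : ℝ → ℝ}
    (hdens : μ = volume.withDensity fun x => ENNReal.ofReal (f x)) (h0 : cdf μ 0 = 0)
    (hq : Monotone (hazardRate μ f) ∨ Antitone (hazardRate μ f))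
    (hpos : ∀ t, 0 ≤ t → 0 < 1 - cdf μ t) {t : ℝ} (ht : 0 ≤ t) :
    1 - cdf μ t = exp (-∫ u in 0..t, hazardRate μ f u) := by
  have hint : ∀ a b, IntervalIntegrable (hazardRate μ f) volume a b := fun a b =>
    hq.elim (·.intervalIntegrable) (·.intervalIntegrable)
  have hmeas : AEStronglyMeasurable (fun u => 1 - cdf μ u) volume :=
    (measurable_const.sub (monotone_cdf μ).measurable).aestronglyMeasurable
  have hbound : ∀ u, ‖1 - cdf μ u‖ ≤ 1 := fun u => by
    rw [Real.norm_eq_abs, abs_le]; constructor <;> linarith [cdf_nonneg μ u, cdf_le_one μ u]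
  have hint' :
      ∀ a b, IntervalIntegrable (fun u => hazardRate μ f u * (1 - cdf μ u)) volume a b :=
    fun a b => ⟨(hint a b).1.mul_bdd hmeas.restrict (ae_of_all _ hbound),
      (hint a b).2.mul_bdd hmeas.restrict (ae_of_all _ hbound)⟩
  refine eq_exp_neg_integral_of_eq_one_sub_integral hint
    (hq.elim (·.tendsto_rightLim) (·.tendsto_rightLim)) hint' (fun s hs => ?_) ht
  rw [cdf_eq_integral_of_withDensity hdens h0 hs
    (fun u hu => ofReal_eq_ofReal_hazardRate_mul hu.1.le (hpos u hu.1.le))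
    (fun u hu => mul_nonneg (le_max_right _ _) (hpos u hu.1.le).le) (hint' 0 s)]

theorem exists_cdf_eq_one_sub_exp_of_lintegral_eq {f : ℝ → ℝ} (hnn : ∀ᵐ x ∂μ, 0 ≤ x)
    (hdens : μ = volume.withDensity fun x => ENNReal.ofReal (f x))
    (hfail : MonotoneOn (fun t => f t / (1 - cdf μ t)) (Ici 0) ∨
      AntitoneOn (fun t => f t / (1 - cdf μ t)) (Ici 0))
    (heq : ∀ t, 0 ≤ t → 2 * ∫⁻ x, μ (Ioi (x + t)) ∂μ = μ (Ioi (t / 2)) ^ 2) :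
    ∃ l, 0 < l ∧ ∀ x, 0 ≤ x → cdf μ x = 1 - exp (-l * x) := by
  have : NullSingletonClass μ := hdens ▸ inferInstance
  have hq := hazardRate_monotone_or_antitone hfail
  set Q : ℝ → ℝ := fun t => ∫ u in 0..t, hazardRate μ f u
  have hcdf : ∀ t, 0 ≤ t → 1 - cdf μ t = exp (-Q t) := fun t ht =>
    one_sub_cdf_eq_exp_neg_integral_hazardRate hdens (cdf_zero_of_ae_nonneg hnn) hq
      (fun s hs => one_sub_cdf_pos hnn heq hs) ht
  have hsurv : ∀ t, 0 ≤ t → μ (Ioi t) = ENNReal.ofReal (exp (-Q t)) := fun t ht => by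
    rw [measure_Ioi_eq_ofReal_one_sub_cdf, hcdf t ht]
  -- a monotone failure rate makes `μ` new better than used, an antitone one new worse than used
  have hmul : (∀ x y, 0 ≤ x → 0 ≤ y → μ (Ioi (x + y)) ≤ μ (Ioi x) * μ (Ioi y)) ∨
      ∀ x y, 0 ≤ x → 0 ≤ y → μ (Ioi x) * μ (Ioi y) ≤ μ (Ioi (x + y)) := by
    refine hq.imp (fun hq x y hx hy => ?_) (fun hq x y hx hy => ?_) <;>
      rw [hsurv x hx, hsurv y hy, hsurv (x + y) (by positivity),
        ← ENNReal.ofReal_mul (exp_nonneg _), ← exp_add] <;>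
      gcongr
    · linarith [hq.integral_add_integral_le hx hy]
    · linarith [hq.integral_le_integral_add_integral hx hy]
  have hdouble : ∀ t, 0 ≤ t → Q (2 * t) = 2 * Q t := fun t ht => by
    have := measure_Ioi_two_mul_eq_sq hnn two_mul_lintegral_measure_Ioi heq hmul ht
    rw [hsurv _ (by positivity), hsurv t ht, ← ENNReal.ofReal_pow (exp_nonneg _), ← exp_nat_mul,
      ENNReal.ofReal_eq_ofReal_iff (exp_nonneg _) (exp_nonneg _), exp_eq_exp] at this
    push_cast at this
    linarith
  obtain ⟨c, hc⟩ : ∃ c, ∀ t, 0 ≤ t → Q t = c * t :=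
    hq.elim (·.exists_integral_eq_mul hdouble) (·.exists_integral_eq_mul hdouble)
  have hexp : ∀ x, 0 ≤ x → cdf μ x = 1 - exp (-c * x) := fun x hx => by
    rw [neg_mul, ← hc x hx, ← hcdf x hx, sub_sub_cancel]
  refine ⟨c, not_le.1 fun hc0 => ?_, hexp⟩
  have hle : ∀ᶠ x in atTop, cdf μ x ≤ 0 := (eventually_ge_atTop 0).mono fun x hx => by
    rw [hexp x hx]
    linarith [one_le_exp (by nlinarith : 0 ≤ -c * x)]
  linarith [le_of_tendsto (tendsto_cdf_atTop μ) hle]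

theorem lintegral_eq_of_cdf_eq_one_sub_exp [NullSingletonClass μ] (hnn : ∀ᵐ x ∂μ, 0 ≤ x)
    {l : ℝ} (hexp : ∀ x, 0 ≤ x → cdf μ x = 1 - exp (-l * x)) {t : ℝ} (ht : 0 ≤ t) :
    2 * ∫⁻ x, μ (Ioi (x + t)) ∂μ = μ (Ioi (t / 2)) ^ 2 := by
  have hsurv : ∀ s, 0 ≤ s → μ (Ioi s) = ENNReal.ofReal (exp (-l * s)) := fun s hs => by
    rw [measure_Ioi_eq_ofReal_one_sub_cdf, hexp s hs, sub_sub_cancel]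
  calc 2 * ∫⁻ x, μ (Ioi (x + t)) ∂μ
      = 2 * ∫⁻ x, μ (Ioi x) * ENNReal.ofReal (exp (-l * t)) ∂μ := by
        congr 1
        refine lintegral_congr_ae (hnn.mono fun x hx => ?_)
        dsimp only
        rw [hsurv _ (by positivity), hsurv x hx, ← ENNReal.ofReal_mul (exp_nonneg _), ← exp_add,
          mul_add]
    _ = ENNReal.ofReal (exp (-l * t)) := by
        rw [lintegral_mul_const' _ _ ENNReal.ofReal_ne_top, ← mul_assoc,
          two_mul_lintegral_measure_Ioi, one_mul]
    _ = μ (Ioi (t / 2)) ^ 2 := by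
        rw [hsurv _ (by positivity), ← ENNReal.ofReal_pow (exp_nonneg _), ← exp_nat_mul]
        ring_nf

theorem map_abs_sub_eq_map_two_mul_min_iff_exists_exp {f : ℝ → ℝ} (hnn : ∀ᵐ x ∂μ, 0 ≤ x)
    (hdens : μ = volume.withDensity fun x => ENNReal.ofReal (f x))
    (hfail : MonotoneOn (fun t => f t / (1 - cdf μ t)) (Ici 0) ∨
      AntitoneOn (fun t => f t / (1 - cdf μ t)) (Ici 0)) :
    (μ.prod μ).map (fun p => |p.1 - p.2|) = (μ.prod μ).map (fun p => 2 * min p.1 p.2) ↔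
      ∃ l, 0 < l ∧ ∀ x, 0 ≤ x → μ (Iic x) = ENNReal.ofReal (1 - exp (-l * x)) := by
  have : NullSingletonClass μ := hdens ▸ inferInstance
  rw [map_abs_sub_eq_map_two_mul_min_iff hnn]
  refine ⟨fun heq => ?_, fun ⟨l, hl, hexp⟩ t ht => ?_⟩
  · obtain ⟨l, hl, hexp⟩ := exists_cdf_eq_one_sub_exp_of_lintegral_eq hnn hdens hfail heq
    exact ⟨l, hl, fun x hx => by rw [← ofReal_cdf, hexp x hx]⟩
  · refine lintegral_eq_of_cdf_eq_one_sub_exp hnn (l := l) (fun x hx => ?_) ht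
    rw [cdf_eq_real, measureReal_def, hexp x hx,
      ENNReal.toReal_ofReal (sub_nonneg.2 (exp_le_one_iff.2 (by nlinarith)))]

end Survival

/-- **Ahsanullah's characterization of the exponential law.** Let `X` and `Y` be
non-negative i.i.d. random variables with an absolutely continuous distribution, with
density `f` and distribution function `F`, whose failure rate `t ↦ f t / (1 - F t)` is
monotone on `[0, ∞)`. Then `|X - Y|` and `2 * min (X, Y)` are identically distributed iff
`X` is exponentially distributed. -/
theorem ahsanullah_characterization_exponential
    {Ω : Type*} [MeasureSpace Ω] [IsProbabilityMeasure (ℙ : Measure Ω)]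
    (X Y : Ω → ℝ) (hX : Measurable X) (hY : Measurable Y)
    (hindep : IndepFun X Y ℙ) (hid : Measure.map Y ℙ = Measure.map X ℙ)
    (hpos : ∀ᵐ ω ∂ℙ, 0 ≤ X ω)
    (f : ℝ → ℝ)
    (hdens : Measure.map X ℙ = volume.withDensity (fun x => ENNReal.ofReal (f x)))
    (F : ℝ → ℝ) (hF : F = fun x => ((Measure.map X ℙ) (Set.Iic x)).toReal)
    (hfailure : MonotoneOn (fun t => f t / (1 - F t)) (Set.Ici (0 : ℝ)) ∨
      AntitoneOn (fun t => f t / (1 - F t)) (Set.Ici (0 : ℝ))) :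
    Measure.map (fun ω => |X ω - Y ω|) ℙ
        = Measure.map (fun ω => 2 * min (X ω) (Y ω)) ℙ ↔
      ∃ l : ℝ, 0 < l ∧ ∀ x : ℝ, 0 ≤ x →
        (Measure.map X ℙ) (Set.Iic x) = ENNReal.ofReal (1 - Real.exp (-l * x)) := by
  set μ := Measure.map X ℙ
  have : IsProbabilityMeasure μ := Measure.isProbabilityMeasure_map hX.aemeasurable
  have hjoint : Measure.map (fun ω => (X ω, Y ω)) ℙ = μ.prod μ := by
    rw [(indepFun_iff_map_prod_eq_prod_map_map hX.aemeasurable hY.aemeasurable).1 hindep, hid]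
  have hlaw : ∀ g : ℝ × ℝ → ℝ, Measurable g →
      Measure.map (fun ω => g (X ω, Y ω)) ℙ = (μ.prod μ).map g := fun g hg => by
    rw [← hjoint, Measure.map_map hg (hX.prodMk hY)]
    rfl
  have hcdf : F = cdf μ := by
    ext x
    rw [hF, cdf_eq_real, measureReal_def]
  rw [hlaw (fun p => |p.1 - p.2|) (by fun_prop), hlaw (fun p => 2 * min p.1 p.2) (by fun_prop)]
  exact map_abs_sub_eq_map_two_mul_min_iff_exists_exp
    ((ae_map_iff hX.aemeasurable measurableSet_Ici).2 hpos) hdens (hcdf ▸ hfailure)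
end

section
/- Let X and Y be i.i.d. random variables each having the normal distribution N(0, τ²) with τ² > 0. Then the random variable k(X,Y) = 2XY/√(X² + Y²) (defined arbitrarily on the null event {X = Y = 0}) again has the normal distribution N(0, τ²). -/
/-!
Write `(X, Y) = (R cos Θ, R sin Θ)`. Since the product of two centred Gaussian densities depends
only on `X² + Y²`, the law of `(R, Θ)` is a product measure with `Θ` uniform on `(-π, π)`.
Then `2XY/√(X² + Y²) = R sin 2Θ`, and doubling preserves the Haar measure of the circle
`ℝ/2πℤ`, so `R sin 2Θ` has the same law as `R sin Θ = Y`.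
-/

open MeasureTheory ProbabilityTheory Real Set
open scoped ENNReal NNReal

theorem MeasureTheory.Measure.prod_map_right {α β γ : Type*} [MeasurableSpace α]
    [MeasurableSpace β] [MeasurableSpace γ] (μ : Measure α) (ν : Measure β) [SFinite μ]
    [SFinite ν] {f : β → γ} (hf : Measurable f) :
    μ.prod (ν.map f) = (μ.prod ν).map (Prod.map id f) := by
  rw [← Measure.map_prod_map μ ν measurable_id hf, Measure.map_id]

theorem Function.Periodic.map_intCast_mul_volume_restrict_Ioc {β : Type*} [MeasurableSpace β]
    {f : ℝ → β} {T : ℝ} (hT : 0 < T) (hf : Function.Periodic f T) (hfm : Measurable f)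
    {n : ℤ} (hn : n ≠ 0) (t : ℝ) :
    (volume.restrict (Ioc t (t + T))).map (fun x => f (n * x)) =
      (volume.restrict (Ioc t (t + T))).map f := by
  have := Fact.mk hT
  have hF : Measurable hf.lift := hfm
  have hmk := AddCircle.measurePreserving_mk T t
  have hzsmul : Measurable fun y : AddCircle T => n • y := (continuous_zsmul n).measurable
  have hlift : (fun x => f (n * x)) = hf.lift ∘ (n • ·) ∘ ((↑) : ℝ → AddCircle T) := by
    ext x
    simp only [Function.comp_apply, ← AddCircle.coe_zsmul, hf.lift_coe, zsmul_eq_mul]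
  rw [hlift, ← Measure.map_map hF (hzsmul.comp hmk.measurable),
    ← Measure.map_map hzsmul hmk.measurable, hmk.map_eq,
    (Measure.measurePreserving_zsmul volume hn).map_eq, ← hmk.map_eq,
    Measure.map_map hF hmk.measurable]
  rfl

theorem withDensity_eq_map_polarCoord_symm {h : ℝ × ℝ → ℝ≥0∞} (hh : Measurable h) :
    volume.withDensity h = ((volume.restrict polarCoord.target).withDensity
      fun p => ENNReal.ofReal p.1 * h (polarCoord.symm p)).map polarCoord.symm := by
  have hsymm : Measurable polarCoord.symm := continuous_polarCoord_symm.measurable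
  refine Measure.ext_of_lintegral _ fun g hg => ?_
  rw [lintegral_withDensity_eq_lintegral_mul _ hh hg, lintegral_map hg hsymm,
    lintegral_withDensity_eq_lintegral_mul _ (by fun_prop)
      (show Measurable fun p => g (polarCoord.symm p) from hg.comp hsymm),
    ← lintegral_comp_polarCoord_symm]
  simp only [Pi.mul_apply, smul_eq_mul, mul_assoc]

theorem gaussianPDFReal_mul_eq_of_sq_add_sq_eq {μ : ℝ} {v : ℝ≥0} {x y x' y' : ℝ}
    (h : (x - μ) ^ 2 + (y - μ) ^ 2 = (x' - μ) ^ 2 + (y' - μ) ^ 2) :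
    gaussianPDFReal μ v x * gaussianPDFReal μ v y =
      gaussianPDFReal μ v x' * gaussianPDFReal μ v y' := by
  simp only [gaussianPDFReal, mul_mul_mul_comm _ (exp _), ← exp_add, ← add_div, ← neg_add, h]

theorem gaussianPDF_mul_eq_of_sq_add_sq_eq {μ : ℝ} {v : ℝ≥0} {x y x' y' : ℝ}
    (h : (x - μ) ^ 2 + (y - μ) ^ 2 = (x' - μ) ^ 2 + (y' - μ) ^ 2) :
    gaussianPDF μ v x * gaussianPDF μ v y = gaussianPDF μ v x' * gaussianPDF μ v y' := by
  simp only [gaussianPDF, ← ENNReal.ofReal_mul (gaussianPDFReal_nonneg _ _ _),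
    gaussianPDFReal_mul_eq_of_sq_add_sq_eq h]

noncomputable def gaussianPolarRadius (v : ℝ≥0) : Measure ℝ :=
  (volume.restrict (Ioi 0)).withDensity
    fun r => ENNReal.ofReal r * gaussianPDF 0 v r * gaussianPDF 0 v 0

instance (v : ℝ≥0) : SFinite (gaussianPolarRadius v) := by
  unfold gaussianPolarRadius
  infer_instance

theorem gaussianReal_prod_eq_map_polarCoord_symm {v : ℝ≥0} (hv : v ≠ 0) :
    (gaussianReal 0 v).prod (gaussianReal 0 v) =
      ((gaussianPolarRadius v).prod (volume.restrict (Ioo (-π) π))).map polarCoord.symm := by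
  have hpdf := measurable_gaussianPDF 0 v
  rw [gaussianReal_of_var_ne_zero 0 hv, prod_withDensity hpdf hpdf, ← Measure.volume_eq_prod,
    withDensity_eq_map_polarCoord_symm (by fun_prop), gaussianPolarRadius,
    prod_withDensity_left (by fun_prop), Measure.prod_restrict, ← Measure.volume_eq_prod]
  congr 2
  ext p
  rw [polarCoord_symm_apply, mul_assoc, gaussianPDF_mul_eq_of_sq_add_sq_eq]
  linear_combination p.1 ^ 2 * cos_sq_add_sin_sq p.2

theorem map_sin_two_mul_volume_restrict_Ioo :
    (volume.restrict (Ioo (-π) π)).map (fun θ => sin (2 * θ)) =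
      (volume.restrict (Ioo (-π) π)).map sin := by
  have h := sin_periodic.map_intCast_mul_volume_restrict_Ioc two_pi_pos measurable_sin
    two_ne_zero (-π)
  rw [show -π + 2 * π = π by ring] at h
  push_cast at h
  rwa [Measure.restrict_congr_set Ioo_ae_eq_Ioc]

noncomputable def sheppMap (p : ℝ × ℝ) : ℝ := 2 * p.1 * p.2 / √(p.1 ^ 2 + p.2 ^ 2)

theorem measurable_sheppMap : Measurable sheppMap := by
  unfold sheppMap
  fun_prop

theorem sheppMap_polarCoord_symm (p : ℝ × ℝ) :
    sheppMap (polarCoord.symm p) = |p.1| * sin (2 * p.2) := by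
  have hnorm : (p.1 * cos p.2) ^ 2 + (p.1 * sin p.2) ^ 2 = p.1 ^ 2 := by
    linear_combination p.1 ^ 2 * cos_sq_add_sin_sq p.2
  rw [sheppMap, polarCoord_symm_apply, hnorm, sqrt_sq_eq_abs, sin_two_mul]
  rcases eq_or_ne p.1 0 with h | h
  · simp [h]
  · field_simp
    rw [← sq_abs p.1]
    ring

theorem map_sheppMap_gaussianReal_prod (v : ℝ≥0) :
    ((gaussianReal 0 v).prod (gaussianReal 0 v)).map sheppMap = gaussianReal 0 v := by
  rcases eq_or_ne v 0 with rfl | hv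
  · simp [gaussianReal_zero_var, Measure.dirac_prod_dirac, Measure.map_dirac' measurable_sheppMap,
      sheppMap]
  set ρ := gaussianPolarRadius v
  set ν := volume.restrict (Ioo (-π) π)
  have hsymm : Measurable polarCoord.symm := continuous_polarCoord_symm.measurable
  have hr_pos : ∀ᵐ p ∂ρ.prod ν, 0 < p.1 :=
    Measure.quasiMeasurePreserving_fst.ae
      ((withDensity_absolutelyContinuous _ _).ae_le (ae_restrict_mem measurableSet_Ioi))
  have hmul : Measurable fun p : ℝ × ℝ => |p.1| * p.2 := by fun_prop
  calc ((gaussianReal 0 v).prod (gaussianReal 0 v)).map sheppMap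
      = (ρ.prod ν).map fun p => |p.1| * sin (2 * p.2) := by
        rw [gaussianReal_prod_eq_map_polarCoord_symm hv, Measure.map_map measurable_sheppMap hsymm]
        simp only [Function.comp_def, sheppMap_polarCoord_symm]
        rfl
    _ = (ρ.prod (ν.map fun θ => sin (2 * θ))).map fun p => |p.1| * p.2 := by
        rw [Measure.prod_map_right _ _ (by fun_prop), Measure.map_map hmul (by fun_prop)]
        rfl
    _ = (ρ.prod (ν.map sin)).map fun p => |p.1| * p.2 := by
        rw [map_sin_two_mul_volume_restrict_Ioo]
    _ = (ρ.prod ν).map fun p => |p.1| * sin p.2 := by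
        rw [Measure.prod_map_right _ _ measurable_sin, Measure.map_map hmul (by fun_prop)]
        rfl
    _ = (ρ.prod ν).map (Prod.snd ∘ polarCoord.symm) := by
        refine Measure.map_congr (hr_pos.mono fun p hp => ?_)
        simp [polarCoord_symm_apply, abs_of_pos hp]
    _ = gaussianReal 0 v := by
        rw [← Measure.map_map measurable_snd hsymm,
          ← gaussianReal_prod_eq_map_polarCoord_symm hv, Measure.map_snd_prod, measure_univ, one_smul]

theorem shepp_property_normal_general
    {Ω : Type*} [MeasureSpace Ω] [IsProbabilityMeasure (ℙ : Measure Ω)]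
    (X Y : Ω → ℝ) (hX : Measurable X) (hY : Measurable Y)
    (hindep : IndepFun X Y ℙ) (v : NNReal)
    (hXlaw : Measure.map X ℙ = gaussianReal 0 v)
    (hYlaw : Measure.map Y ℙ = gaussianReal 0 v) :
    Measure.map (fun ω => 2 * X ω * Y ω / Real.sqrt ((X ω) ^ 2 + (Y ω) ^ 2)) ℙ
      = gaussianReal 0 v := by
  have hjoint : (ℙ : Measure Ω).map (fun ω => (X ω, Y ω)) =
      (gaussianReal 0 v).prod (gaussianReal 0 v) := by
    rw [(indepFun_iff_map_prod_eq_prod_map_map hX.aemeasurable hY.aemeasurable).mp hindep,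
      hXlaw, hYlaw]
  calc (ℙ : Measure Ω).map (fun ω => 2 * X ω * Y ω / Real.sqrt ((X ω) ^ 2 + (Y ω) ^ 2))
      = ((ℙ : Measure Ω).map fun ω => (X ω, Y ω)).map sheppMap :=
        (Measure.map_map measurable_sheppMap (hX.prodMk hY)).symm
    _ = gaussianReal 0 v := by rw [hjoint, map_sheppMap_gaussianReal_prod]

/-- **Shepp property of the normal law** (Shepp, 1964). If `X` and `Y` are i.i.d. with law
`N(0, τ²)`, `τ² > 0`, then `2XY/√(X² + Y²)` again has the law `N(0, τ²)`.
(On the null event `{X = Y = 0}` the quotient is defined via the convention `0/0 = 0`.) -/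
theorem shepp_property_normal
    {Ω : Type*} [MeasureSpace Ω] [IsProbabilityMeasure (ℙ : Measure Ω)]
    (X Y : Ω → ℝ) (hX : Measurable X) (hY : Measurable Y)
    (hindep : IndepFun X Y ℙ) (v : NNReal) (hv : 0 < v)
    (hXlaw : Measure.map X ℙ = gaussianReal 0 v)
    (hYlaw : Measure.map Y ℙ = gaussianReal 0 v) :
    Measure.map (fun ω => 2 * X ω * Y ω / Real.sqrt ((X ω) ^ 2 + (Y ω) ^ 2)) ℙ
      = gaussianReal 0 v :=
  shepp_property_normal_general X Y hX hY hindep v hXlaw hYlaw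
end

section
/- Let X and Y be i.i.d. random variables with continuous distribution function F. Then |X| and |max(X,Y)| are identically distributed if and only if F is symmetric with respect to zero, i.e., 1 − F(x) − F(−x) = 0 for all x ∈ ℝ. -/
/-!
For continuous `F`, `P(|X| ≤ a) = F a - F (-a)`, and since `max X Y` has distribution function
`F ^ 2`, `P(|max X Y| ≤ a) = F a ^ 2 - F (-a) ^ 2 = (F a - F (-a)) * (F a + F (-a))`. Equality in
law therefore says that for each `a ≥ 0` either `F (-a) = F a` or `F a + F (-a) = 1`. The first
alternative at `b` makes `F` constant on `[-b, b]`, so for `b ≥ a ≥ 0` the continuous function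
`g b = F b + F (-b)` takes one of the two values `g a` and `1`. It takes the value `1` for large
`b`, hence, by connectedness of `[a, ∞)`, also at `a`.
-/

open MeasureTheory ProbabilityTheory Set Filter Topology

theorem Monotone.apply_eq_of_apply_neg_eq {F : ℝ → ℝ} (hF : Monotone F) {b x : ℝ}
    (hb : F (-b) = F b) (hx : x ∈ Icc (-b) b) : F x = F b :=
  le_antisymm (hF hx.2) (hb.symm.trans_le (hF hx.1))

theorem Monotone.add_apply_neg_eq_one {F : ℝ → ℝ} (hF : Monotone F) (hcont : Continuous F)
    (htop : Tendsto F atTop (𝓝 1)) (hbot : Tendsto F atBot (𝓝 0))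
    (h : ∀ a, 0 ≤ a → F (-a) = F a ∨ F a + F (-a) = 1) (x : ℝ) :
    F x + F (-x) = 1 := by
  wlog hx : 0 ≤ x generalizing x
  · simpa [add_comm] using this (-x) (by linarith)
  obtain ⟨b, hxb, hb⟩ : ∃ b, x ≤ b ∧ F (-b) < F b := by
    have hgap : Tendsto (fun b => F b - F (-b)) atTop (𝓝 (1 - 0)) :=
      htop.sub (hbot.comp tendsto_neg_atTop_atBot)
    exact ((eventually_ge_atTop x).and
      ((hgap.eventually (lt_mem_nhds (by norm_num))).mono fun b => sub_pos.mp)).exists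
  have hvalues : MapsTo (fun b => F b + F (-b)) (Ici x) {F x + F (-x), 1} := by
    intro c hc
    rcases h c (hx.trans hc) with hc' | hc'
    · left
      have hxc : Icc (-x) x ⊆ Icc (-c) c := Icc_subset_Icc (by linarith [mem_Ici.mp hc]) hc
      simp only [hF.apply_eq_of_apply_neg_eq hc' (hxc (left_mem_Icc.mpr (by linarith))),
        hF.apply_eq_of_apply_neg_eq hc' (hxc (right_mem_Icc.mpr (by linarith))), hc']
    · right; exact hc'
  have hconst := isPreconnected_Ici.constant_of_mapsTo (toFinite _).isDiscrete
    (hcont.add (hcont.comp continuous_neg)).continuousOn hvalues self_mem_Ici hxb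
  rcases h b (hx.trans hxb) with hb' | hb'
  · exact absurd hb' hb.ne
  · exact hconst.trans hb'

theorem sub_eq_sq_sub_sq_iff {R : Type*} [CommRing R] [NoZeroDivisors R] {u v : R} :
    u - v = u ^ 2 - v ^ 2 ↔ v = u ∨ u + v = 1 := by
  have hfactor : u ^ 2 - v ^ 2 - (u - v) = (u - v) * (u + v - 1) := by ring
  rw [eq_comm, ← sub_eq_zero, hfactor, mul_eq_zero, sub_eq_zero, sub_eq_zero, eq_comm (a := u)]

theorem measure_Icc_eq_ofReal_cdf_sub {μ : Measure ℝ} [IsProbabilityMeasure μ]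
    (hcont : Continuous (cdf μ)) (a b : ℝ) :
    μ (Icc a b) = ENNReal.ofReal (cdf μ b - cdf μ a) := by
  conv_lhs => rw [← measure_cdf μ]
  rw [StieltjesFunction.measure_Icc, hcont.continuousWithinAt.leftLim_eq]

theorem Measure.map_abs_eq_iff {μ ν : Measure ℝ} [IsFiniteMeasure μ] :
    μ.map abs = ν.map abs ↔ ∀ a, 0 ≤ a → μ (Icc (-a) a) = ν (Icc (-a) a) := by
  have hpre : ∀ a : ℝ, abs ⁻¹' Iic a = Icc (-a) a := fun a => by ext; simp [abs_le]
  refine ⟨fun h a _ => ?_, fun h => Measure.ext_of_Iic _ _ fun a => ?_⟩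
  · rw [← hpre, ← Measure.map_apply measurable_abs measurableSet_Iic, h,
      Measure.map_apply measurable_abs measurableSet_Iic]
  · rw [Measure.map_apply measurable_abs measurableSet_Iic,
      Measure.map_apply measurable_abs measurableSet_Iic, hpre]
    rcases le_or_gt 0 a with ha | ha
    · exact h a ha
    · simp [Icc_eq_empty (by linarith : ¬-a ≤ a)]

theorem Measure.map_abs_eq_iff_of_continuous_cdf {μ ν : Measure ℝ} [IsProbabilityMeasure μ]
    [IsProbabilityMeasure ν] (hμ : Continuous (cdf μ)) (hν : Continuous (cdf ν)) :
    μ.map abs = ν.map abs ↔ ∀ a, 0 ≤ a → cdf μ a - cdf μ (-a) = cdf ν a - cdf ν (-a) := by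
  simp only [Measure.map_abs_eq_iff, measure_Icc_eq_ofReal_cdf_sub hμ,
    measure_Icc_eq_ofReal_cdf_sub hν]
  exact forall₂_congr fun a ha => ENNReal.ofReal_eq_ofReal_iff
    (sub_nonneg.2 (monotone_cdf μ (neg_le_self ha))) (sub_nonneg.2 (monotone_cdf ν (neg_le_self ha)))

theorem cdf_map_max_eq_mul {Ω : Type*} [MeasurableSpace Ω] {P : Measure Ω}
    [IsProbabilityMeasure P] {X Y : Ω → ℝ} (hX : Measurable X) (hY : Measurable Y)
    (hindep : IndepFun X Y P) (x : ℝ) :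
    cdf (P.map fun ω => max (X ω) (Y ω)) x = cdf (P.map X) x * cdf (P.map Y) x := by
  have := Measure.isProbabilityMeasure_map (μ := P) hX.aemeasurable
  have := Measure.isProbabilityMeasure_map (μ := P) hY.aemeasurable
  have := Measure.isProbabilityMeasure_map (μ := P) (hX.max hY).aemeasurable
  have hpre : (fun ω => max (X ω) (Y ω)) ⁻¹' Iic x = X ⁻¹' Iic x ∩ Y ⁻¹' Iic x := by
    ext; simp
  simp only [cdf_eq_real, measureReal_def,
    Measure.map_apply (hX.max hY) measurableSet_Iic, Measure.map_apply hX measurableSet_Iic,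
    Measure.map_apply hY measurableSet_Iic, hpre,
    hindep.measure_inter_preimage_eq_mul _ _ measurableSet_Iic measurableSet_Iic,
    ENNReal.toReal_mul]

/-- **Baringhaus–Henze characterization of symmetry.** Let `X` and `Y` be i.i.d. random
variables with continuous distribution function `F`. Then `|X|` and `|max (X, Y)|` are
identically distributed iff `F` is symmetric about zero, i.e.
`1 - F x - F (-x) = 0` for all `x`. -/
theorem baringhaus_henze_characterization_symmetry
    {Ω : Type*} [MeasureSpace Ω] [IsProbabilityMeasure (ℙ : Measure Ω)]
    (X Y : Ω → ℝ) (hX : Measurable X) (hY : Measurable Y)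
    (hindep : IndepFun X Y ℙ) (hid : Measure.map Y ℙ = Measure.map X ℙ)
    (F : ℝ → ℝ) (hF : F = fun x => ((Measure.map X ℙ) (Set.Iic x)).toReal)
    (hcont : Continuous F) :
    Measure.map (fun ω => |X ω|) ℙ = Measure.map (fun ω => |max (X ω) (Y ω)|) ℙ ↔
      ∀ x : ℝ, 1 - F x - F (-x) = 0 := by
  have hM : Measurable fun ω => max (X ω) (Y ω) := hX.max hY
  have := Measure.isProbabilityMeasure_map (μ := (ℙ : Measure Ω)) hX.aemeasurable
  have := Measure.isProbabilityMeasure_map (μ := (ℙ : Measure Ω)) hM.aemeasurable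
  have hFcdf : F = cdf (Measure.map X ℙ) := by ext x; rw [hF, cdf_eq_real, measureReal_def]
  have hGcdf : cdf (Measure.map (fun ω => max (X ω) (Y ω)) ℙ) = fun x => F x ^ 2 := by
    ext x; rw [cdf_map_max_eq_mul hX hY hindep, hid, hFcdf, sq]
  have hmono : Monotone F := hFcdf ▸ monotone_cdf _
  rw [← Function.comp_def abs X, ← Measure.map_map measurable_abs hX,
    ← Function.comp_def abs (fun ω => max (X ω) (Y ω)), ← Measure.map_map measurable_abs hM,
    Measure.map_abs_eq_iff_of_continuous_cdf (hFcdf ▸ hcont) (by rw [hGcdf]; fun_prop),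
    ← hFcdf, hGcdf]
  simp only [sub_eq_sq_sub_sq_iff]
  constructor
  · intro h x
    linarith [hmono.add_apply_neg_eq_one hcont (hFcdf ▸ tendsto_cdf_atTop _)
      (hFcdf ▸ tendsto_cdf_atBot _) h x]
  · intro h a _
    right; linarith [h a]
end

section
/- Let k ≥ 2 and let X_1,...,X_k be i.i.d. random variables with absolutely continuous distribution function F. Denote X_{1,k} = min(X_1,...,X_k) and X_{k,k} = max(X_1,...,X_k). Then |X_{1,k}| and |X_{k,k}| are identically distributed if and only if F is symmetric about zero, i.e., 1 − F(x) − F(−x) = 0 for all x ∈ ℝ. -/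
/-!
With `F` continuous, `P(max ≤ x) = F x ^ k` and `P(min > x) = (1 - F x) ^ k`, so for `x ≥ 0`
`P(|max| ≤ x) = F x ^ k - F (-x) ^ k` and `P(|min| ≤ x) = (1 - F (-x)) ^ k - (1 - F x) ^ k`.
Equality of the two says `g (F x) = g (F (-x))` for `g t = t ^ k + (1 - t) ^ k`, a function strictly
increasing in `|t - 1/2|`; hence `|F x - 1/2| = |F (-x) - 1/2|`. If `F x + F (-x) ≠ 1`, then
`F x = F (-x) = c ≠ 1/2`. For `c < 1/2` the intermediate value theorem gives `y ≥ x` with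
`F y = 1/2`, which forces `F (-y) = 1/2` although `F (-y) ≤ F (-x) = c`; the case `c > 1/2` is the
same argument applied to `1 - F (-·)`.
-/

open MeasureTheory ProbabilityTheory Filter Topology Set

lemma pow_add_one_sub_pow_strictMonoOn {k : ℕ} (hk : 2 ≤ k) :
    StrictMonoOn (fun t : ℝ => t ^ k + (1 - t) ^ k) (Ici (1 / 2)) := by
  refine strictMonoOn_of_deriv_pos (convex_Ici _) (by fun_prop) fun t ht => ?_
  rw [interior_Ici, mem_Ioi] at ht
  have hderiv : deriv (fun t : ℝ => t ^ k + (1 - t) ^ k) t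
      = k * (t ^ (k - 1) - (1 - t) ^ (k - 1)) := by
    have hd : HasDerivAt (fun t : ℝ => t ^ k + (1 - t) ^ k)
        (k * t ^ (k - 1) + k * (1 - t) ^ (k - 1) * -1) t :=
      (hasDerivAt_pow k t).add (((hasDerivAt_id' t).const_sub 1).pow k)
    rw [hd.deriv]
    ring
  have hpow : (1 - t) ^ (k - 1) < t ^ (k - 1) :=
    calc (1 - t) ^ (k - 1) ≤ |1 - t| ^ (k - 1) := (le_abs_self _).trans (abs_pow _ _).le
      _ < t ^ (k - 1) :=
        pow_lt_pow_left₀ (abs_lt.2 ⟨by linarith, by linarith⟩) (abs_nonneg _) (by omega)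
  rw [hderiv]
  exact mul_pos (by positivity) (sub_pos.2 hpow)

lemma abs_sub_half_eq_of_pow_add_one_sub_pow_eq {k : ℕ} (hk : 2 ≤ k) {a b : ℝ}
    (h : a ^ k + (1 - a) ^ k = b ^ k + (1 - b) ^ k) : |a - 1 / 2| = |b - 1 / 2| := by
  have fold (t : ℝ) :
      t ^ k + (1 - t) ^ k = (1 / 2 + |t - 1 / 2|) ^ k + (1 - (1 / 2 + |t - 1 / 2|)) ^ k := by
    rcases abs_choice (t - 1 / 2) with h | h <;> rw [h] <;> ring_nf
  have := (pow_add_one_sub_pow_strictMonoOn hk).injOn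
    (by simp [abs_nonneg] : 1 / 2 + |a - 1 / 2| ∈ Ici (1 / 2))
    (by simp [abs_nonneg] : 1 / 2 + |b - 1 / 2| ∈ Ici (1 / 2)) (by rw [← fold, ← fold, h])
  linarith

lemma half_le_of_abs_sub_half_eq {F : ℝ → ℝ} (hmono : Monotone F) (hcont : Continuous F)
    (htop : Tendsto F atTop (𝓝 1)) (habs : ∀ y, |F y - 1 / 2| = |F (-y) - 1 / 2|) {y : ℝ}
    (hy : F y = F (-y)) : 1 / 2 ≤ F y := by
  by_contra! hlt
  obtain ⟨b, hb, hyb⟩ := ((htop.eventually (lt_mem_nhds (by norm_num : (1 : ℝ) / 2 < 1))).and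
    (eventually_ge_atTop y)).exists
  obtain ⟨z, ⟨hyz, -⟩, hz⟩ := intermediate_value_Icc hyb hcont.continuousOn ⟨hlt.le, hb.le⟩
  have hz' : F (-z) = 1 / 2 := by simpa [hz, sub_eq_zero] using (habs z).symm
  linarith [hmono (neg_le_neg hyz)]

lemma add_neg_eq_one_of_abs_sub_half_eq {F : ℝ → ℝ} (hmono : Monotone F) (hcont : Continuous F)
    (htop : Tendsto F atTop (𝓝 1)) (hbot : Tendsto F atBot (𝓝 0))
    (habs : ∀ y, |F y - 1 / 2| = |F (-y) - 1 / 2|) (y : ℝ) : F y + F (-y) = 1 := by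
  have reflect (a : ℝ) : 1 - a - 1 / 2 = -(a - 1 / 2) := by ring
  rcases abs_eq_abs.1 (habs y) with h | h
  · have hlow := half_le_of_abs_sub_half_eq hmono hcont htop habs (y := y) (by linarith)
    have hhigh := half_le_of_abs_sub_half_eq (F := fun y => 1 - F (-y))
      (fun a b hab => sub_le_sub_left (hmono (neg_le_neg hab)) 1) (by fun_prop)
      (by simpa using tendsto_const_nhds.sub (hbot.comp tendsto_neg_atTop_atBot))
      (fun z => by rw [neg_neg, reflect, reflect, abs_neg, abs_neg, habs z]) (y := y)
      (congrArg (1 - ·) (by rw [neg_neg]; linarith))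
    linarith
  · linarith

lemma forall_pow_add_one_sub_pow_eq_iff {k : ℕ} (hk : 2 ≤ k) {F : ℝ → ℝ} (hmono : Monotone F)
    (hcont : Continuous F) (htop : Tendsto F atTop (𝓝 1)) (hbot : Tendsto F atBot (𝓝 0)) :
    (∀ x, F x ^ k + (1 - F x) ^ k = F (-x) ^ k + (1 - F (-x)) ^ k) ↔ ∀ x, F x + F (-x) = 1 := by
  refine ⟨fun h => add_neg_eq_one_of_abs_sub_half_eq hmono hcont htop hbot fun y =>
    abs_sub_half_eq_of_pow_add_one_sub_pow_eq hk (h y), fun h x => ?_⟩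
  rw [show F (-x) = 1 - F x by linarith [h x], sub_sub_cancel, add_comm]

lemma continuous_cdf_iff (μ : Measure ℝ) [IsProbabilityMeasure μ] :
    Continuous (cdf μ) ↔ ∀ x, μ {x} = 0 := by
  have hatom (x : ℝ) : μ {x} = ENNReal.ofReal (cdf μ x - Function.leftLim (cdf μ) x) := by
    rw [← StieltjesFunction.measure_singleton, measure_cdf]
  simp_rw [continuous_iff_continuousAt, (cdf μ).mono.continuousAt_iff_leftLim_eq_rightLim,
    (cdf μ).rightLim_eq, hatom, ENNReal.ofReal_eq_zero, sub_nonpos]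
  exact forall_congr' fun x => ⟨le_of_eq ∘ Eq.symm, ((cdf μ).mono.leftLim_le le_rfl).antisymm⟩

section AbsoluteValue

variable {Ω : Type*} [MeasurableSpace Ω] {P : Measure Ω} [IsProbabilityMeasure P]

lemma map_abs_Iic {Y : Ω → ℝ} (hY : Measurable Y) (hYc : Continuous (cdf (P.map Y))) (x : ℝ) :
    P.map (fun ω => |Y ω|) (Iic x) = ENNReal.ofReal (cdf (P.map Y) x - cdf (P.map Y) (-x)) := by
  have := Measure.isProbabilityMeasure_map (μ := P) hY.aemeasurable
  have hpre : (fun ω => |Y ω|) ⁻¹' Iic x = Y ⁻¹' Icc (-x) x := by ext; simp [abs_le]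
  rw [Measure.map_apply hY.abs measurableSet_Iic, hpre, ← Measure.map_apply hY measurableSet_Icc,
    ← measure_congr (Ioc_ae_eq_Icc' ((continuous_cdf_iff _).1 hYc (-x))),
    ← (cdf (P.map Y)).measure_Ioc, measure_cdf]

lemma map_abs_eq_map_abs_iff {Y Z : Ω → ℝ} (hY : Measurable Y) (hZ : Measurable Z)
    (hYc : Continuous (cdf (P.map Y))) (hZc : Continuous (cdf (P.map Z))) :
    P.map (fun ω => |Y ω|) = P.map (fun ω => |Z ω|) ↔
      ∀ x, cdf (P.map Y) x - cdf (P.map Y) (-x) = cdf (P.map Z) x - cdf (P.map Z) (-x) := by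
  refine ⟨fun h x => ?_, fun h => Measure.ext_of_Iic _ _ fun x => by
    rw [map_abs_Iic hY hYc, map_abs_Iic hZ hZc, h]⟩
  wlog hx : 0 ≤ x generalizing x
  · linarith [neg_neg x ▸ this (-x) (by linarith)]
  have hnonneg (ρ : Measure ℝ) : 0 ≤ cdf ρ x - cdf ρ (-x) :=
    sub_nonneg.2 (monotone_cdf ρ (by linarith))
  have := congrArg (· (Iic x)) h
  rw [map_abs_Iic hY hYc, map_abs_Iic hZ hZc] at this
  exact (ENNReal.ofReal_eq_ofReal_iff (hnonneg _) (hnonneg _)).1 this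

end AbsoluteValue

section OrderStatistics

variable {Ω ι : Type*} [Fintype ι] {X : ι → Ω → ℝ} (hne : (Finset.univ : Finset ι).Nonempty)

lemma preimage_sup'_Iic (x : ℝ) :
    (fun ω => Finset.univ.sup' hne fun i => X i ω) ⁻¹' Iic x = ⋂ i, X i ⁻¹' Iic x := by
  ext; simp [Finset.sup'_le_iff]

lemma preimage_inf'_Ioi (x : ℝ) :
    (fun ω => Finset.univ.inf' hne fun i => X i ω) ⁻¹' Ioi x = ⋂ i, X i ⁻¹' Ioi x := by
  ext; simp [Finset.lt_inf'_iff]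

variable [MeasurableSpace Ω]

lemma measurable_sup'_of_measurable (hX : ∀ i, Measurable (X i)) :
    Measurable fun ω => Finset.univ.sup' hne fun i => X i ω :=
  measurable_of_Iic fun x =>
    preimage_sup'_Iic hne x ▸ MeasurableSet.iInter fun i => hX i measurableSet_Iic

lemma measurable_inf'_of_measurable (hX : ∀ i, Measurable (X i)) :
    Measurable fun ω => Finset.univ.inf' hne fun i => X i ω :=
  measurable_of_Ioi fun x =>
    preimage_inf'_Ioi hne x ▸ MeasurableSet.iInter fun i => hX i measurableSet_Ioi

variable {P : Measure Ω} [IsProbabilityMeasure P] {μ : Measure ℝ} [IsProbabilityMeasure μ]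

lemma cdf_map_sup' (hX : ∀ i, Measurable (X i)) (hindep : iIndepFun X P)
    (hid : ∀ i, P.map (X i) = μ) (x : ℝ) :
    cdf (P.map fun ω => Finset.univ.sup' hne fun i => X i ω) x = cdf μ x ^ Fintype.card ι := by
  have hM := measurable_sup'_of_measurable hne hX
  have := Measure.isProbabilityMeasure_map (μ := P) hM.aemeasurable
  rw [cdf_eq_real, map_measureReal_apply hM measurableSet_Iic, preimage_sup'_Iic,
    measureReal_def, hindep.meas_iInter fun i => ⟨Iic x, measurableSet_Iic, rfl⟩]
  simp_rw [← Measure.map_apply (hX _) measurableSet_Iic, hid, ENNReal.toReal_prod,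
    Finset.prod_const, Finset.card_univ, cdf_eq_real, measureReal_def]

lemma cdf_map_inf' (hX : ∀ i, Measurable (X i)) (hindep : iIndepFun X P)
    (hid : ∀ i, P.map (X i) = μ) (x : ℝ) :
    cdf (P.map fun ω => Finset.univ.inf' hne fun i => X i ω) x
      = 1 - (1 - cdf μ x) ^ Fintype.card ι := by
  have hm := measurable_inf'_of_measurable hne hX
  have := Measure.isProbabilityMeasure_map (μ := P) hm.aemeasurable
  rw [cdf_eq_real, ← compl_Ioi, probReal_compl_eq_one_sub measurableSet_Ioi,
    map_measureReal_apply hm measurableSet_Ioi, preimage_inf'_Ioi, measureReal_def,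
    hindep.meas_iInter fun i => ⟨Ioi x, measurableSet_Ioi, rfl⟩]
  simp_rw [← Measure.map_apply (hX _) measurableSet_Ioi, hid, ENNReal.toReal_prod,
    Finset.prod_const, Finset.card_univ, ← measureReal_def, ← compl_Iic,
    probReal_compl_eq_one_sub measurableSet_Iic, cdf_eq_real]

end OrderStatistics

/-- **Ahsanullah's characterization of symmetry of order `k`.** Let `k ≥ 2` and
`X 0, ..., X (k-1)` be i.i.d. random variables with absolutely continuous distribution
function `F`. Then `|X_{1,k}| = |min|` and `|X_{k,k}| = |max|` are identically
distributed iff `F` is symmetric about zero, i.e. `1 - F x - F (-x) = 0` for all `x`. -/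
theorem ahsanullah_characterization_symmetry
    {Ω : Type*} [MeasureSpace Ω] [IsProbabilityMeasure (ℙ : Measure Ω)]
    (k : ℕ) (hk : 2 ≤ k)
    (X : Fin k → Ω → ℝ) (hX : ∀ i, Measurable (X i))
    (hindep : iIndepFun X ℙ)
    (hid : ∀ i, Measure.map (X i) ℙ = Measure.map (X ⟨0, by omega⟩) ℙ)
    (hac : Measure.map (X ⟨0, by omega⟩) ℙ ≪ (volume : Measure ℝ))
    (F : ℝ → ℝ) (hF : F = fun x => ((Measure.map (X ⟨0, by omega⟩) ℙ) (Set.Iic x)).toReal) :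
    Measure.map (fun ω =>
        |Finset.univ.inf' ⟨⟨0, by omega⟩, Finset.mem_univ _⟩ (fun i => X i ω)|) ℙ
      = Measure.map (fun ω =>
        |Finset.univ.sup' ⟨⟨0, by omega⟩, Finset.mem_univ _⟩ (fun i => X i ω)|) ℙ ↔
      ∀ x : ℝ, 1 - F x - F (-x) = 0 := by
  generalize_proofs hne
  set μ := Measure.map (X ⟨0, by omega⟩) ℙ
  have : IsProbabilityMeasure μ := Measure.isProbabilityMeasure_map (hX _).aemeasurable
  obtain rfl : F = cdf μ := by ext x; rw [hF, cdf_eq_real, measureReal_def]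
  have hcont : Continuous (cdf μ) := (continuous_cdf_iff μ).2 fun _ => hac Real.volume_singleton
  have hmin := measurable_inf'_of_measurable hne hX
  have hmax := measurable_sup'_of_measurable hne hX
  have hcdf_min := funext (cdf_map_inf' hne hX hindep hid)
  have hcdf_max := funext (cdf_map_sup' hne hX hindep hid)
  rw [map_abs_eq_map_abs_iff hmin hmax (by rw [hcdf_min]; fun_prop) (by rw [hcdf_max]; fun_prop),
    hcdf_min, hcdf_max]
  simp only [Fintype.card_fin]
  have key := forall_pow_add_one_sub_pow_eq_iff hk (monotone_cdf μ) hcont (tendsto_cdf_atTop μ)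
    (tendsto_cdf_atBot μ)
  constructor
  · intro h x
    linarith [key.1 (fun y => by linarith [h y]) x]
  · intro h x
    linarith [key.2 (fun y => by linarith [h y]) x]
end

section
/- Let X and Y be i.i.d. non-negative random variables with an absolutely continuous distribution whose support has infimum 0. If min{X, Y} and |X − Y| are independent, then there exists λ > 0 such that both X and Y have the exponential distribution with distribution function F(x) = 1 − e^{−λx}, x > 0. -/
open MeasureTheory ProbabilityTheory Set Filter Topology
open scoped ENNReal

/-! Write `G x = μ (Ioi x)` for the common survival function and `J t = ∫ G (x + t) dμ`.
Splitting according to which coordinate is smaller,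
`P(min ≥ s, |X - Y| > t) = 2 ∫_{x ≥ s} G (x + t) dμ`, so the independence of the minimum and the
range reads `∫_{x ≥ s} G (x + t) dμ = μ [s, ∞)² J t`. Comparing with the case `t = 0`, the measures
with densities `J 0 • G (· + t)` and `J t • G` agree on every `Ici s`, hence
`J 0 G (x + t) = J t G x` for `μ`-a.e. `x`, and by continuity of `G` for every `x` in the support
of `μ`. Evaluating at `0 ∈ supp μ` gives `G (a + t) = G a G t` for `a ∈ supp μ`. The set of such
`a` is a closed additive submonoid of `[0, ∞)` containing arbitrarily small positive points, so it
is all of `[0, ∞)`, and the continuous solutions of this Cauchy equation are `G x = G 1 ^ x`. -/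

lemma AddSubmonoid.Ici_zero_subset_of_isClosed (T : AddSubmonoid ℝ) (hT : IsClosed (T : Set ℝ))
    (hsmall : ∀ ε > 0, ∃ a ∈ T, 0 < a ∧ a < ε) : Ici (0 : ℝ) ⊆ T := by
  intro s hs
  rw [← hT.closure_eq, Metric.mem_closure_iff]
  intro ε hε
  obtain ⟨a, haT, ha0, haε⟩ := hsmall ε hε
  refine ⟨⌈s / a⌉₊ • a, T.nsmul_mem haT _, ?_⟩
  have hle : s ≤ ⌈s / a⌉₊ * a := (div_le_iff₀ ha0).1 (Nat.le_ceil _)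
  have hlt : ⌈s / a⌉₊ * a < s + a := by
    calc (⌈s / a⌉₊ : ℝ) * a < (s / a + 1) * a :=
          mul_lt_mul_of_pos_right (Nat.ceil_lt_add_one (div_nonneg hs ha0.le)) ha0
      _ = s + a := by field_simp
  rw [nsmul_eq_mul, Real.dist_eq, abs_sub_lt_iff]
  constructor <;> linarith

section CauchyEquation

variable {g : ℝ → ℝ}

lemma map_natCast_mul_of_add_eq_mul (h0 : g 0 = 1)
    (hmul : ∀ s t, 0 ≤ s → 0 ≤ t → g (s + t) = g s * g t) (n : ℕ) {a : ℝ} (ha : 0 ≤ a) :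
    g (n * a) = g a ^ n := by
  induction n with
  | zero => simp [h0]
  | succ n ih =>
    rw [Nat.cast_succ, add_one_mul, hmul _ _ (by positivity) ha, ih, pow_succ]

lemma pos_of_add_eq_mul (hg : Continuous g) (h0 : g 0 = 1)
    (hmul : ∀ s t, 0 ≤ s → 0 ≤ t → g (s + t) = g s * g t) {x : ℝ} (hx : 0 ≤ x) : 0 < g x := by
  have hlim : Tendsto (fun n : ℕ => g (x / n)) atTop (𝓝 1) :=
    h0 ▸ (hg.tendsto 0).comp (tendsto_const_div_atTop_nhds_zero_nat x)
  obtain ⟨n, hpos, hn⟩ :=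
    ((hlim.eventually_const_lt zero_lt_one).and (eventually_gt_atTop 0)).exists
  have hx : x = n * (x / n) := by field_simp
  rw [hx, map_natCast_mul_of_add_eq_mul h0 hmul n (by positivity)]
  exact pow_pos hpos n

lemma eq_rpow_of_add_eq_mul (hg : Continuous g) (h0 : g 0 = 1)
    (hmul : ∀ s t, 0 ≤ s → 0 ≤ t → g (s + t) = g s * g t) {x : ℝ} (hx : 0 ≤ x) :
    g x = g 1 ^ x := by
  have hg1 : 0 < g 1 := pos_of_add_eq_mul hg h0 hmul zero_le_one
  let U : AddSubmonoid ℝ :=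
    { carrier := {a | 0 ≤ a ∧ g a = g 1 ^ a}
      zero_mem' := ⟨le_rfl, by rw [h0, Real.rpow_zero]⟩
      add_mem' := fun {a b} ha hb => ⟨add_nonneg ha.1 hb.1, by
        rw [hmul a b ha.1 hb.1, ha.2, hb.2, Real.rpow_add hg1]⟩ }
  have hU : IsClosed (U : Set ℝ) :=
    (isClosed_le continuous_const continuous_id).inter
      (isClosed_eq hg (continuous_const.rpow continuous_id fun _ => Or.inl hg1.ne'))
  have hsmall : ∀ ε > 0, ∃ a ∈ U, 0 < a ∧ a < ε := by
    intro ε hε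
    obtain ⟨n, hn⟩ := exists_nat_one_div_lt hε
    have hn' : ((n + 1 : ℕ) : ℝ) ≠ 0 := by positivity
    have hroot : g (((n + 1 : ℕ) : ℝ)⁻¹) ^ (n + 1) = g 1 := by
      rw [← map_natCast_mul_of_add_eq_mul h0 hmul _ (by positivity), mul_inv_cancel₀ hn']
    refine ⟨((n + 1 : ℕ) : ℝ)⁻¹, ⟨by positivity, ?_⟩, by positivity, by simpa using hn⟩
    rw [← hroot, Real.pow_rpow_inv_natCast (pos_of_add_eq_mul hg h0 hmul (by positivity)).le
      (Nat.succ_ne_zero n)]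
  exact (U.Ici_zero_subset_of_isClosed hU hsmall hx).2

end CauchyEquation

lemma MeasureTheory.Measure.eqOn_support_of_ae_eq {X Y : Type*} [TopologicalSpace X]
    [MeasurableSpace X] [TopologicalSpace Y] [T2Space Y] {μ : Measure X} {f g : X → Y}
    (hf : Continuous f) (hg : Continuous g) (h : f =ᵐ[μ] g) : EqOn f g μ.support := fun x hx => by
  by_contra hne
  exact Measure.subset_compl_support_of_isOpen (isClosed_eq hf hg).isOpen_compl (ae_iff.1 h) hne hx

lemma ProbabilityTheory.continuous_cdf (μ : Measure ℝ) [IsProbabilityMeasure μ]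
    [NullSingletonClass μ] : Continuous (cdf μ) := by
  refine continuous_iff_continuousAt.2 fun a =>
    (cdf μ).mono.continuousAt_iff_leftLim_eq_rightLim.2 ?_
  have h := (cdf μ).measure_singleton a
  rw [measure_cdf, measure_singleton, eq_comm, ENNReal.ofReal_eq_zero, sub_nonpos] at h
  rw [StieltjesFunction.rightLim_eq]
  exact le_antisymm ((cdf μ).mono.leftLim_le le_rfl) h

lemma measureReal_Ioi_eq_one_sub_cdf (μ : Measure ℝ) [IsProbabilityMeasure μ] (x : ℝ) :
    μ.real (Ioi x) = 1 - cdf μ x := by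
  rw [← compl_Iic, probReal_compl_eq_one_sub measurableSet_Iic, cdf_eq_real]

lemma continuous_measureReal_Ioi (μ : Measure ℝ) [IsProbabilityMeasure μ]
    [NullSingletonClass μ] : Continuous fun x => μ.real (Ioi x) := by
  simp_rw [measureReal_Ioi_eq_one_sub_cdf]
  exact continuous_const.sub (continuous_cdf μ)

lemma measureReal_Ioi_zero (μ : Measure ℝ) [IsProbabilityMeasure μ] [NullSingletonClass μ]
    (h0 : μ (Iio 0) = 0) : μ.real (Ioi 0) = 1 := by
  rw [← compl_Iic, probReal_compl_eq_one_sub measurableSet_Iic, measureReal_def,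
    ← measure_congr Iio_ae_eq_Iic, h0, ENNReal.toReal_zero, sub_zero]

lemma ProbabilityTheory.IndepFun.map_of_comp {Ω α β γ : Type*} [MeasurableSpace Ω]
    [MeasurableSpace α] [MeasurableSpace β] [MeasurableSpace γ] {P : Measure Ω} {Z : Ω → α}
    {f : α → β} {g : α → γ} (hZ : Measurable Z) (hf : Measurable f) (hg : Measurable g)
    (h : IndepFun (f ∘ Z) (g ∘ Z) P) : IndepFun f g (P.map Z) := by
  rw [indepFun_iff_measure_inter_preimage_eq_mul] at h ⊢
  intro s t hs ht
  rw [Measure.map_apply hZ ((hf hs).inter (hg ht)), Measure.map_apply hZ (hf hs),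
    Measure.map_apply hZ (hg ht)]
  exact h s t hs ht

lemma MeasureTheory.Measure.prod_fst_mem_add_lt (μ ν : Measure ℝ) [SFinite ν] {A : Set ℝ}
    (hA : MeasurableSet A) (t : ℝ) :
    (μ.prod ν) {z | z.1 ∈ A ∧ z.1 + t < z.2} = ∫⁻ x in A, ν (Ioi (x + t)) ∂μ := by
  have hS : MeasurableSet {z : ℝ × ℝ | z.1 ∈ A ∧ z.1 + t < z.2} :=
    (measurable_fst hA).inter (measurableSet_lt (measurable_fst.add_const t) measurable_snd)
  rw [Measure.prod_apply hS, ← lintegral_indicator hA]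
  congr 1 with x
  by_cases hx : x ∈ A <;> simp [hx, Set.indicator, Ioi]

lemma MeasureTheory.Measure.prod_self_min_mem_lt_abs_sub (μ : Measure ℝ) [SFinite μ] {A : Set ℝ}
    (hA : MeasurableSet A) {t : ℝ} (ht : 0 ≤ t) :
    (μ.prod μ) {z | min z.1 z.2 ∈ A ∧ t < |z.1 - z.2|} = 2 * ∫⁻ x in A, μ (Ioi (x + t)) ∂μ := by
  set S : Set (ℝ × ℝ) := {z | z.1 ∈ A ∧ z.1 + t < z.2}
  have hS : MeasurableSet S := (measurable_fst hA).inter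
    (measurableSet_lt (measurable_fst.add_const t) measurable_snd)
  have hsplit : {z : ℝ × ℝ | min z.1 z.2 ∈ A ∧ t < |z.1 - z.2|} = Prod.swap ⁻¹' S ∪ S := by
    ext ⟨x, y⟩
    simp only [S, mem_ofPred_eq, mem_union, mem_preimage, Prod.swap_prod_mk, lt_abs]
    rcases le_total x y with h | h
    · rw [min_eq_left h]; constructor
      · rintro ⟨hA, h' | h'⟩ <;> [linarith; exact Or.inr ⟨hA, by linarith⟩]
      · rintro (⟨-, h'⟩ | ⟨hA, h'⟩) <;> [linarith; exact ⟨hA, Or.inr (by linarith)⟩]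
    · rw [min_eq_right h]; constructor
      · rintro ⟨hA, h' | h'⟩ <;> [exact Or.inl ⟨hA, by linarith⟩; linarith]
      · rintro (⟨hA, h'⟩ | ⟨-, h'⟩) <;> [exact ⟨hA, Or.inl (by linarith)⟩; linarith]
  have hdisj : Disjoint (Prod.swap ⁻¹' S) S :=
    disjoint_left.2 fun _ ⟨_, h₁⟩ ⟨_, h₂⟩ => by dsimp at h₁; linarith
  rw [hsplit, measure_union hdisj hS, Measure.measurePreserving_swap.measure_preimage
    hS.nullMeasurableSet, Measure.prod_fst_mem_add_lt μ μ hA, two_mul]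

lemma setLIntegral_Ici_measure_Ioi_add (μ : Measure ℝ) [IsProbabilityMeasure μ]
    (hind : IndepFun (fun z : ℝ × ℝ => min z.1 z.2) (fun z => |z.1 - z.2|) (μ.prod μ))
    (s : ℝ) {t : ℝ} (ht : 0 ≤ t) :
    ∫⁻ x in Ici s, μ (Ioi (x + t)) ∂μ = μ (Ici s) ^ 2 * ∫⁻ x, μ (Ioi (x + t)) ∂μ := by
  have h := hind.measure_inter_preimage_eq_mul (Ici s) (Ioi t) measurableSet_Ici measurableSet_Ioi
  have hinter : (fun z : ℝ × ℝ => min z.1 z.2) ⁻¹' Ici s ∩ (fun z => |z.1 - z.2|) ⁻¹' Ioi t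
      = {z | min z.1 z.2 ∈ Ici s ∧ t < |z.1 - z.2|} := rfl
  have hmin : (fun z : ℝ × ℝ => min z.1 z.2) ⁻¹' Ici s = Ici s ×ˢ Ici s := by
    ext z; simp only [mem_preimage, mem_Ici, le_min_iff, mem_prod]
  have hrange : (fun z : ℝ × ℝ => |z.1 - z.2|) ⁻¹' Ioi t
      = {z | min z.1 z.2 ∈ univ ∧ t < |z.1 - z.2|} := by
    ext z; simp
  rw [hinter, hmin, Measure.prod_prod, hrange, Measure.prod_self_min_mem_lt_abs_sub μ .univ ht,
    Measure.prod_self_min_mem_lt_abs_sub μ measurableSet_Ici ht, Measure.restrict_univ] at h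
  refine (ENNReal.mul_right_inj two_ne_zero ENNReal.ofNat_ne_top).1 ?_
  rw [h]
  ring

lemma ae_eq_of_forall_setLIntegral_Ici_eq {μ : Measure ℝ} {f g : ℝ → ℝ≥0∞}
    (hf : AEMeasurable f μ) (hg : AEMeasurable g μ) (hfi : ∫⁻ x, f x ∂μ ≠ ∞)
    (h : ∀ s, ∫⁻ x in Ici s, f x ∂μ = ∫⁻ x in Ici s, g x ∂μ) : f =ᵐ[μ] g := by
  have : IsFiniteMeasure (μ.withDensity f) := isFiniteMeasure_withDensity hfi
  refine (withDensity_eq_iff hf hg hfi).1 (Measure.ext_of_Ici _ _ fun s => ?_)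
  rw [withDensity_apply _ measurableSet_Ici, withDensity_apply _ measurableSet_Ici, h s]

lemma measurable_measure_Ioi (μ : Measure ℝ) : Measurable fun x => μ (Ioi x) :=
  Antitone.measurable fun _ _ h => measure_mono (Ioi_subset_Ioi h)

lemma lintegral_measure_Ioi_add_ne_top (μ : Measure ℝ) [IsProbabilityMeasure μ] (t : ℝ) :
    ∫⁻ x, μ (Ioi (x + t)) ∂μ ≠ ∞ :=
  ((lintegral_mono fun _ => prob_le_one).trans_lt (by simp)).ne

lemma measure_Ioi_add_ae_eq (μ : Measure ℝ) [IsProbabilityMeasure μ]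
    (hind : IndepFun (fun z : ℝ × ℝ => min z.1 z.2) (fun z => |z.1 - z.2|) (μ.prod μ))
    {t : ℝ} (ht : 0 ≤ t) :
    (fun x => (∫⁻ y, μ (Ioi y) ∂μ) * μ (Ioi (x + t)))
      =ᵐ[μ] fun x => (∫⁻ y, μ (Ioi (y + t)) ∂μ) * μ (Ioi x) := by
  have hJ₀ : ∫⁻ y, μ (Ioi y) ∂μ ≠ ∞ := by simpa using lintegral_measure_Ioi_add_ne_top μ 0
  have hJ := lintegral_measure_Ioi_add_ne_top μ t
  have hmeas := measurable_measure_Ioi μ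
  have hmeas_t : Measurable fun x => μ (Ioi (x + t)) := hmeas.comp (measurable_add_const t)
  refine ae_eq_of_forall_setLIntegral_Ici_eq (hmeas_t.const_mul _).aemeasurable
    (hmeas.const_mul _).aemeasurable ?_ fun s => ?_
  · rw [lintegral_const_mul' _ _ hJ₀]
    exact ENNReal.mul_ne_top hJ₀ hJ
  · rw [lintegral_const_mul' _ _ hJ₀, lintegral_const_mul' _ _ hJ,
      setLIntegral_Ici_measure_Ioi_add μ hind s ht]
    have h₀ := setLIntegral_Ici_measure_Ioi_add μ hind s le_rfl
    simp only [add_zero] at h₀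
    rw [h₀]
    ring

lemma zero_mem_support_of_forall_pos (μ : Measure ℝ) (h0 : μ (Iio 0) = 0)
    (hpos : ∀ ε > 0, 0 < μ (Iio ε)) : 0 ∈ μ.support := by
  refine (Measure.mem_support_iff_forall 0).2 fun U hU => ?_
  obtain ⟨ε, hε, hball⟩ := Metric.mem_nhds_iff.1 hU
  refine (hpos ε hε).trans_le ?_
  calc μ (Iio ε) ≤ μ (Iio 0 ∪ U) := measure_mono fun x hx => by
        rcases lt_or_ge x 0 with h | h
        · exact Or.inl h
        · exact Or.inr <| hball <| by
            rwa [Metric.mem_ball, Real.dist_0_eq_abs, abs_of_nonneg h]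
    _ ≤ μ (Iio 0) + μ U := measure_union_le _ _
    _ = μ U := by rw [h0, zero_add]

lemma exists_mem_support_pos_lt (μ : Measure ℝ) [NullSingletonClass μ] (h0 : μ (Iio 0) = 0)
    (hsupp : 0 ∈ μ.support) {ε : ℝ} (hε : 0 < ε) : ∃ a ∈ μ.support, 0 < a ∧ a < ε := by
  have hpos : 0 < μ (Ioo 0 ε) := by
    refine ((Measure.mem_support_iff_forall 0).1 hsupp _
      (Ioo_mem_nhds (neg_lt_zero.2 hε) hε)).trans_le ?_
    calc μ (Ioo (-ε) ε) ≤ μ (Iic 0 ∪ Ioo 0 ε) := measure_mono fun x hx => by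
          rcases le_or_gt x 0 with h | h
          exacts [Or.inl h, Or.inr ⟨h, hx.2⟩]
      _ ≤ μ (Iic 0) + μ (Ioo 0 ε) := measure_union_le _ _
      _ = μ (Ioo 0 ε) := by rw [← measure_congr Iio_ae_eq_Iic, h0, zero_add]
  obtain ⟨a, ⟨ha0, haε⟩, ha⟩ := Measure.nonempty_inter_support_of_pos hpos
  exact ⟨a, ha, ha0, haε⟩

lemma measureReal_Ioi_add_eq_mul_of_mem_support (μ : Measure ℝ) [IsProbabilityMeasure μ]
    [NullSingletonClass μ] (h0 : μ (Iio 0) = 0) (hsupp : 0 ∈ μ.support)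
    (hind : IndepFun (fun z : ℝ × ℝ => min z.1 z.2) (fun z => |z.1 - z.2|) (μ.prod μ))
    {a t : ℝ} (ha : a ∈ μ.support) (ht : 0 ≤ t) :
    μ.real (Ioi (a + t)) = μ.real (Ioi a) * μ.real (Ioi t) := by
  have hg := continuous_measureReal_Ioi μ
  have hg0 := measureReal_Ioi_zero μ h0
  have hrel : ∀ {u}, 0 ≤ u → EqOn (fun x => (∫⁻ y, μ (Ioi y) ∂μ).toReal * μ.real (Ioi (x + u)))
      (fun x => (∫⁻ y, μ (Ioi (y + u)) ∂μ).toReal * μ.real (Ioi x)) μ.support := fun hu =>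
    Measure.eqOn_support_of_ae_eq (continuous_const.mul (hg.comp (continuous_add_const _)))
      (continuous_const.mul hg) <| by
        filter_upwards [measure_Ioi_add_ae_eq μ hind hu] with x hx
        simp only [measureReal_def, ← ENNReal.toReal_mul, hx]
  have hJ₀ : (∫⁻ y, μ (Ioi y) ∂μ).toReal ≠ 0 := by
    refine ENNReal.toReal_ne_zero.2
      ⟨fun hzero => ?_, by simpa using lintegral_measure_Ioi_add_ne_top μ 0⟩
    have hnull : (fun x => μ.real (Ioi x)) =ᵐ[μ] 0 := by
      filter_upwards [(lintegral_eq_zero_iff (measurable_measure_Ioi μ)).1 hzero] with x hx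
      simp [measureReal_def, hx]
    exact one_ne_zero <|
      hg0.symm.trans (Measure.eqOn_support_of_ae_eq hg continuous_const hnull hsupp)
  have hat := hrel ht ha
  have h0t := hrel ht hsupp
  simp only [zero_add, hg0, mul_one] at hat h0t
  refine mul_left_cancel₀ hJ₀ ?_
  rw [hat, ← h0t]
  ring

lemma measureReal_Ioi_add_eq_mul (μ : Measure ℝ) [IsProbabilityMeasure μ]
    [NullSingletonClass μ] (h0 : μ (Iio 0) = 0) (hsupp : 0 ∈ μ.support)
    (hind : IndepFun (fun z : ℝ × ℝ => min z.1 z.2) (fun z => |z.1 - z.2|) (μ.prod μ))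
    {s t : ℝ} (hs : 0 ≤ s) (ht : 0 ≤ t) :
    μ.real (Ioi (s + t)) = μ.real (Ioi s) * μ.real (Ioi t) := by
  have hg := continuous_measureReal_Ioi μ
  let T : AddSubmonoid ℝ :=
    { carrier := {a | 0 ≤ a ∧ ∀ t, 0 ≤ t → μ.real (Ioi (a + t)) = μ.real (Ioi a) * μ.real (Ioi t)}
      zero_mem' := ⟨le_rfl, fun t _ => by rw [zero_add, measureReal_Ioi_zero μ h0, one_mul]⟩
      add_mem' := fun {a b} ha hb => ⟨add_nonneg ha.1 hb.1, fun t ht => by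
        rw [add_assoc, ha.2 _ (add_nonneg hb.1 ht), hb.2 t ht, ha.2 b hb.1, mul_assoc]⟩ }
  have hT : IsClosed (T : Set ℝ) := by
    change IsClosed {a | 0 ≤ a ∧ ∀ t, 0 ≤ t →
      μ.real (Ioi (a + t)) = μ.real (Ioi a) * μ.real (Ioi t)}
    simp only [ofPred_and, ofPred_forall]
    exact (isClosed_le continuous_const continuous_id).inter <| isClosed_iInter fun t =>
      isClosed_iInter fun _ =>
        isClosed_eq (hg.comp (continuous_add_const t)) (hg.mul continuous_const)
  have hsmall : ∀ ε > 0, ∃ a ∈ T, 0 < a ∧ a < ε := fun ε hε => by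
    obtain ⟨a, ha, ha0, haε⟩ := exists_mem_support_pos_lt μ h0 hsupp hε
    exact ⟨a, ⟨ha0.le, fun _ => measureReal_Ioi_add_eq_mul_of_mem_support μ h0 hsupp hind ha⟩,
      ha0, haε⟩
  exact (T.Ici_zero_subset_of_isClosed hT hsmall hs).2 t ht

theorem exists_measure_Iic_eq_one_sub_exp (μ : Measure ℝ) [IsProbabilityMeasure μ]
    [NullSingletonClass μ] (h0 : μ (Iio 0) = 0) (hsupp : 0 ∈ μ.support)
    (hind : IndepFun (fun z : ℝ × ℝ => min z.1 z.2) (fun z => |z.1 - z.2|) (μ.prod μ)) :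
    ∃ l > 0, ∀ x, 0 ≤ x → μ (Iic x) = ENNReal.ofReal (1 - Real.exp (-l * x)) := by
  set c := μ.real (Ioi 1) with hc
  have hg := continuous_measureReal_Ioi μ
  have hg0 := measureReal_Ioi_zero μ h0
  have hmul : ∀ s t, 0 ≤ s → 0 ≤ t → μ.real (Ioi (s + t)) = μ.real (Ioi s) * μ.real (Ioi t) :=
    fun _ _ => measureReal_Ioi_add_eq_mul μ h0 hsupp hind
  have hc0 : 0 < c := pos_of_add_eq_mul hg hg0 hmul zero_le_one
  have hc1 : c < 1 := by
    have hIio : 0 < μ (Iio 1) :=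
      (Measure.mem_support_iff_forall 0).1 hsupp _ (Iio_mem_nhds one_pos)
    have hIic : 0 < μ.real (Iic 1) := ENNReal.toReal_pos
      (hIio.trans_le (measure_mono Iio_subset_Iic_self)).ne' (measure_ne_top _ _)
    rw [hc, ← compl_Iic, probReal_compl_eq_one_sub measurableSet_Iic]
    linarith
  refine ⟨-Real.log c, neg_pos.2 (Real.log_neg hc0 hc1), fun x hx => ?_⟩
  rw [← ofReal_measureReal, ← compl_Ioi, probReal_compl_eq_one_sub measurableSet_Ioi,
    eq_rpow_of_add_eq_mul hg hg0 hmul hx, Real.rpow_def_of_pos hc0, neg_neg]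

/-- **Fisz's characterization of the exponential law.** Let `X` and `Y` be i.i.d.
non-negative random variables with an absolutely continuous distribution whose support
has infimum `0`. If `min (X, Y)` and `|X - Y|` are independent, then there exists
`λ > 0` such that both `X` and `Y` are exponentially distributed with rate `λ`, i.e.
their distribution function is `F x = 1 - exp (-λ x)` for `x > 0`. -/
theorem fisz_characterization_exponential
    {Ω : Type*} [MeasureSpace Ω] [IsProbabilityMeasure (ℙ : Measure Ω)]
    (X Y : Ω → ℝ) (hX : Measurable X) (hY : Measurable Y)
    (hindep : IndepFun X Y ℙ) (hid : Measure.map Y ℙ = Measure.map X ℙ)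
    (hpos : ∀ᵐ ω ∂ℙ, 0 ≤ X ω)
    (hac : Measure.map X ℙ ≪ (volume : Measure ℝ))
    (hinf : ∀ ε : ℝ, 0 < ε → 0 < ℙ {ω | X ω < ε})
    (hmin_range_indep :
      IndepFun (fun ω => min (X ω) (Y ω)) (fun ω => |X ω - Y ω|) ℙ) :
    ∃ l : ℝ, 0 < l ∧ ∀ x : ℝ, 0 < x →
      (Measure.map X ℙ) (Set.Iic x) = ENNReal.ofReal (1 - Real.exp (-l * x)) ∧
      (Measure.map Y ℙ) (Set.Iic x) = ENNReal.ofReal (1 - Real.exp (-l * x)) := by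
  set μ := Measure.map X ℙ
  have : IsProbabilityMeasure μ := Measure.isProbabilityMeasure_map hX.aemeasurable
  have : NullSingletonClass μ := ⟨fun x => hac (measure_singleton x)⟩
  have hlaw : Measure.map (fun ω => (X ω, Y ω)) ℙ = μ.prod μ := by
    rw [(indepFun_iff_map_prod_eq_prod_map_map hX.aemeasurable hY.aemeasurable).1 hindep, hid]
  have h0 : μ (Iio 0) = 0 := by
    rw [Measure.map_apply hX measurableSet_Iio]
    exact (by simpa only [not_le] using ae_iff.1 hpos : ℙ {ω | X ω < 0} = 0)
  have hsupp : 0 ∈ μ.support := zero_mem_support_of_forall_pos μ h0 fun ε hε => by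
    rw [Measure.map_apply hX measurableSet_Iio]
    exact hinf ε hε
  have hind : IndepFun (fun z : ℝ × ℝ => min z.1 z.2) (fun z => |z.1 - z.2|) (μ.prod μ) :=
    hlaw ▸ hmin_range_indep.map_of_comp (hX.prodMk hY) (by fun_prop) (by fun_prop)
  obtain ⟨l, hl, hF⟩ := exists_measure_Iic_eq_one_sub_exp μ h0 hsupp hind
  exact ⟨l, hl, fun x hx => ⟨hF x hx.le, hid ▸ hF x hx.le⟩⟩
end
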